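/- arXiv:2403.04291 — 3 statements merged into one kernel-verified Lean document; each statement's English description precedes it below -/
import Mathlib

section
/- Let p : [0,T] × Ω → ℝ be C² with Ω = [0,L]² and periodic in space, and suppose the spatial integral ∫_Ω p(x, t) dx is constant in time. Let T_h(t) = h² ∑_{i,j=1}^N p(x_i, y_j, t) be the composite trapezoidal (equivalently, periodic Riemann) sum on the uniform grid with h = L/N. Then |T_h(t_{k+1}) − T_h(t_k)| ≤ C τ h² where τ = t_{k+1} − t_k and C depends only on sup norms of ∂_t∂_{xx} p and ∂_t∂_{yy} p over [0,T] × Ω. -/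
open intervalIntegral MeasureTheory

/-- Mean value inequality on an interval. -/
lemma mvt_bound13 {g g' : ℝ → ℝ} {a b C x y : ℝ}
    (hg : ∀ z ∈ Set.Icc a b, HasDerivAt g (g' z) z)
    (hC : ∀ z ∈ Set.Icc a b, |g' z| ≤ C)
    (hx : x ∈ Set.Icc a b) (hy : y ∈ Set.Icc a b) :
    |g y - g x| ≤ C * |y - x| := by
  have := (convex_Icc a b).norm_image_sub_le_of_norm_hasDerivWithin_le
    (f := g) (f' := g') (fun z hz => (hg z hz).hasDerivWithinAt)
    (fun z hz => by simpa [Real.norm_eq_abs] using hC z hz) hx hy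
  simpa [Real.norm_eq_abs] using this

/-- Quadrature error of the periodic left-endpoint (trapezoidal) rule. -/
lemma riemann_err13 (Lp : ℝ) (hLp : 0 < Lp) (f f' : ℝ → ℝ) (M : ℝ)
    (hd : ∀ x, HasDerivAt f (f' x) x)
    (hlip : ∀ x ∈ Set.Icc (0:ℝ) Lp, ∀ y ∈ Set.Icc (0:ℝ) Lp, |f' x - f' y| ≤ M * |x - y|)
    (hper : f Lp = f 0) (n : ℕ) (hn : 0 < n) :
    |(Lp/n) * ∑ i ∈ Finset.range n, f (i * (Lp/n)) - ∫ x in (0:ℝ)..Lp, f x|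
      ≤ 2 * M * Lp * (Lp/n)^2 := by
  have hM0 : 0 ≤ M := by
    have h1 := hlip 0 (by constructor <;> [rfl; exact hLp.le]) Lp
      (by constructor <;> [exact hLp.le; rfl])
    have h2 : |(0:ℝ) - Lp| = Lp := by rw [abs_sub_comm]; simp [abs_of_pos hLp]
    nlinarith [abs_nonneg (f' 0 - f' Lp)]
  set h : ℝ := Lp / n with hh_def
  have hh : 0 < h := div_pos hLp (by exact_mod_cast hn)
  set a : ℕ → ℝ := fun i => i * h with ha_def
  have ha0 : a 0 = 0 := by simp [ha_def]
  have han : a n = Lp := by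
    simp only [ha_def, hh_def]
    field_simp
  have hstep : ∀ i : ℕ, a (i+1) - a i = h := by
    intro i; simp only [ha_def]; push_cast; ring
  have hmono : ∀ i : ℕ, a i ≤ a (i+1) := by
    intro i; nlinarith [hstep i, hh.le]
  have hmem : ∀ i : ℕ, i ≤ n → a i ∈ Set.Icc (0:ℝ) Lp := by
    intro i hi
    have hcast : (i:ℝ) ≤ n := by exact_mod_cast hi
    constructor
    · exact mul_nonneg (Nat.cast_nonneg i) hh.le
    · calc a i = (i:ℝ) * h := rfl
        _ ≤ (n:ℝ) * h := by nlinarith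
        _ = a n := rfl
        _ = Lp := han
  have hsub : ∀ i : ℕ, i < n → Set.Icc (a i) (a (i+1)) ⊆ Set.Icc 0 Lp := by
    intro i hi
    exact Set.Icc_subset_Icc (hmem i hi.le).1 (hmem (i+1) hi).2
  have hcf : Continuous f := by
    rw [continuous_iff_continuousAt]; exact fun x => (hd x).continuousAt
  have hcf' : ContinuousOn f' (Set.Icc 0 Lp) := by
    have : LipschitzOnWith (Real.toNNReal M) f' (Set.Icc 0 Lp) := by
      rw [lipschitzOnWith_iff_dist_le_mul]
      intro x hx y hy
      simpa [Real.dist_eq, Real.coe_toNNReal M hM0] using hlip x hx y hy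
    exact this.continuousOn
  -- integrability pieces
  have hfint : ∀ i : ℕ, i < n → IntervalIntegrable f volume (a i) (a (i+1)) :=
    fun i _ => hcf.intervalIntegrable _ _
  have hf'int : ∀ i : ℕ, i < n → IntervalIntegrable f' volume (a i) (a (i+1)) := by
    intro i hi
    apply ContinuousOn.intervalIntegrable
    apply hcf'.mono
    rw [Set.uIcc_of_le (hmono i)]
    exact hsub i hi
  have hf'int0L : IntervalIntegrable f' volume 0 Lp := by
    apply ContinuousOn.intervalIntegrable
    rwa [Set.uIcc_of_le hLp.le]
  -- ∫ f' = 0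
  have hintf' : (∫ x in (0:ℝ)..Lp, f' x) = 0 := by
    rw [integral_eq_sub_of_hasDerivAt (fun x _ => hd x) hf'int0L, hper, sub_self]
  -- split integral into cells
  have hsplit : (∫ x in (0:ℝ)..Lp, f x) = ∑ i ∈ Finset.range n, ∫ x in a i..a (i+1), f x := by
    rw [sum_integral_adjacent_intervals hfint, ha0, han]
  have hsplit' : (0:ℝ) = ∑ i ∈ Finset.range n, ∫ x in a i..a (i+1), f' x := by
    rw [sum_integral_adjacent_intervals hf'int, ha0, han, hintf']
  -- ∫ (x - a i) over cell
  have hlin : ∀ i : ℕ, (∫ x in a i..a (i+1), (x - a i)) = h^2/2 := by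
    intro i
    rw [intervalIntegral.integral_sub intervalIntegrable_id intervalIntegrable_const,
      integral_id, intervalIntegral.integral_const, smul_eq_mul]
    have hb : a (i+1) = a i + h := by linarith [hstep i]
    rw [hb]; ring
  -- per-cell Taylor estimate
  have hcell : ∀ i ∈ Finset.range n,
      |(∫ x in a i..a (i+1), (f (a i) - f x)) + f' (a i) * (h^2/2)| ≤ M * h^3 := by
    intro i hi
    rw [Finset.mem_range] at hi
    have I1 : IntervalIntegrable (fun x => f (a i) - f x) volume (a i) (a (i+1)) :=
      (continuous_const.sub hcf).intervalIntegrable _ _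
    have I2 : IntervalIntegrable (fun x => f' (a i) * (x - a i)) volume (a i) (a (i+1)) :=
      (continuous_const.mul (continuous_id.sub continuous_const)).intervalIntegrable _ _
    have e1 : (∫ x in a i..a (i+1), (f (a i) - f x)) + f' (a i) * (h^2/2)
        = ∫ x in a i..a (i+1), (f (a i) - f x + f' (a i) * (x - a i)) := by
      rw [intervalIntegral.integral_add I1 I2, intervalIntegral.integral_const_mul, hlin i]
    rw [e1]
    have hbd : ∀ x ∈ Set.uIoc (a i) (a (i+1)),
        ‖f (a i) - f x + f' (a i) * (x - a i)‖ ≤ M * h^2 := by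
      intro x hx
      rw [Set.uIoc_of_le (hmono i)] at hx
      have hxIcc : x ∈ Set.Icc (a i) (a (i+1)) := ⟨hx.1.le, hx.2⟩
      have haiIcc : a i ∈ Set.Icc (a i) (a (i+1)) := ⟨le_refl _, hmono i⟩
      have hb : a (i+1) = a i + h := by linarith [hstep i]
      have hg'bd : ∀ z ∈ Set.Icc (a i) (a (i+1)), |f' z - f' (a i)| ≤ M * h := by
        intro z hz
        have h1 := hlip z (hsub i hi hz) (a i) (hmem i hi.le)
        have h2 : |z - a i| ≤ h := by
          rw [abs_of_nonneg (by linarith [hz.1])]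
          linarith [hz.2, hstep i]
        calc |f' z - f' (a i)| ≤ M * |z - a i| := h1
          _ ≤ M * h := mul_le_mul_of_nonneg_left h2 hM0
      have hmvt := mvt_bound13 (g := fun z => f z - f' (a i) * z)
        (g' := fun z => f' z - f' (a i)) (a := a i) (b := a (i+1)) (C := M * h)
        (fun z _ => by
          exact ((hd z).sub ((hasDerivAt_id z).const_mul (f' (a i)))).congr_deriv (by ring))
        hg'bd haiIcc hxIcc
      have e2 : f (a i) - f x + f' (a i) * (x - a i)
          = -((fun z => f z - f' (a i) * z) x - (fun z => f z - f' (a i) * z) (a i)) := by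
        simp only []; ring
      rw [Real.norm_eq_abs, e2, abs_neg]
      have h3 : |x - a i| ≤ h := by
        rw [abs_of_nonneg (by linarith [hxIcc.1])]
        linarith [hxIcc.2, hstep i]
      calc |(fun z => f z - f' (a i) * z) x - (fun z => f z - f' (a i) * z) (a i)|
          ≤ M * h * |x - a i| := hmvt
        _ ≤ M * h * h := mul_le_mul_of_nonneg_left h3 (mul_nonneg hM0 hh.le)
        _ = M * h^2 := by ring
    have := intervalIntegral.norm_integral_le_of_norm_le_const hbd
    rw [Real.norm_eq_abs] at this
    calc |∫ x in a i..a (i+1), (f (a i) - f x + f' (a i) * (x - a i))|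
        ≤ M * h^2 * |a (i+1) - a i| := this
      _ = M * h^3 := by rw [hstep i, abs_of_pos hh]; ring
  -- per-cell estimate for f'
  have hcellf' : ∀ i ∈ Finset.range n,
      |h * f' (a i) - ∫ x in a i..a (i+1), f' x| ≤ M * h^2 := by
    intro i hi
    rw [Finset.mem_range] at hi
    have e1 : h * f' (a i) - (∫ x in a i..a (i+1), f' x)
        = ∫ x in a i..a (i+1), (f' (a i) - f' x) := by
      rw [intervalIntegral.integral_sub intervalIntegrable_const (hf'int i hi),
        intervalIntegral.integral_const, hstep i, smul_eq_mul]
    rw [e1]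
    have hbd : ∀ x ∈ Set.uIoc (a i) (a (i+1)), ‖f' (a i) - f' x‖ ≤ M * h := by
      intro x hx
      rw [Set.uIoc_of_le (hmono i)] at hx
      have hxIcc : x ∈ Set.Icc (a i) (a (i+1)) := ⟨hx.1.le, hx.2⟩
      have h1 := hlip (a i) (hmem i hi.le) x (hsub i hi hxIcc)
      have h2 : |a i - x| ≤ h := by
        rw [abs_sub_comm, abs_of_nonneg (by linarith [hxIcc.1])]
        linarith [hxIcc.2, hstep i]
      calc |f' (a i) - f' x| ≤ M * |a i - x| := h1
        _ ≤ M * h := mul_le_mul_of_nonneg_left h2 hM0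
    have := intervalIntegral.norm_integral_le_of_norm_le_const hbd
    rw [Real.norm_eq_abs] at this
    calc |∫ x in a i..a (i+1), (f' (a i) - f' x)| ≤ M * h * |a (i+1) - a i| := this
      _ = M * h^2 := by rw [hstep i, abs_of_pos hh]; ring
  have hnh : (n:ℝ) * h = Lp := han
  -- Riemann sum of f' is small
  have hsumf' : |h * ∑ i ∈ Finset.range n, f' (a i)| ≤ M * Lp * h := by
    have e1 : h * ∑ i ∈ Finset.range n, f' (a i)
        = ∑ i ∈ Finset.range n, (h * f' (a i) - ∫ x in a i..a (i+1), f' x) := by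
      rw [Finset.sum_sub_distrib, ← hsplit', Finset.mul_sum]
      ring
    rw [e1]
    refine le_trans (Finset.abs_sum_le_sum_abs _ _) ?_
    refine le_trans (Finset.sum_le_sum hcellf') ?_
    rw [Finset.sum_const, Finset.card_range, nsmul_eq_mul]
    have : (n:ℝ) * (M * h^2) = M * Lp * h := by rw [← hnh]; ring
    exact le_of_eq this
  -- rewrite per-cell error as constant minus integral
  have hcellrw : ∀ i ∈ Finset.range n,
      (∫ x in a i..a (i+1), (f (a i) - f x)) = h * f (a i) - ∫ x in a i..a (i+1), f x := by
    intro i _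
    rw [intervalIntegral.integral_sub intervalIntegrable_const (hcf.intervalIntegrable _ _),
      intervalIntegral.integral_const, hstep i, smul_eq_mul]
  have hdecomp : h * ∑ i ∈ Finset.range n, f (a i) - ∫ x in (0:ℝ)..Lp, f x
      = (∑ i ∈ Finset.range n, ((∫ x in a i..a (i+1), (f (a i) - f x)) + f' (a i) * (h^2/2)))
        - (h/2) * (h * ∑ i ∈ Finset.range n, f' (a i)) := by
    rw [hsplit, Finset.sum_add_distrib, Finset.sum_congr rfl hcellrw, Finset.sum_sub_distrib,
      ← Finset.mul_sum, ← Finset.sum_mul]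
    ring
  have hSE : |∑ i ∈ Finset.range n, ((∫ x in a i..a (i+1), (f (a i) - f x)) + f' (a i) * (h^2/2))|
      ≤ (n:ℝ) * (M * h^3) := by
    refine le_trans (Finset.abs_sum_le_sum_abs _ _) ?_
    refine le_trans (Finset.sum_le_sum hcell) ?_
    rw [Finset.sum_const, Finset.card_range, nsmul_eq_mul]
  have final : |h * ∑ i ∈ Finset.range n, f (a i) - ∫ x in (0:ℝ)..Lp, f x| ≤ 2*M*Lp*h^2 := by
    rw [hdecomp]
    have step1 : |(∑ i ∈ Finset.range n, ((∫ x in a i..a (i+1), (f (a i) - f x)) + f' (a i) * (h^2/2)))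
        - (h/2) * (h * ∑ i ∈ Finset.range n, f' (a i))|
        ≤ (n:ℝ) * (M * h^3) + (h/2) * (M * Lp * h) := by
      refine le_trans (abs_sub _ _) (add_le_add hSE ?_)
      rw [abs_mul, abs_of_pos (by linarith : (0:ℝ) < h/2)]
      exact mul_le_mul_of_nonneg_left hsumf' (by linarith)
    refine le_trans step1 ?_
    have e3 : (n:ℝ) * (M * h^3) = M * Lp * h^2 := by rw [← hnh]; ring
    have e4 : (h/2) * (M * Lp * h) = M * Lp * h^2 / 2 := by ring
    rw [e3, e4]
    have : 0 ≤ M * Lp * h^2 := by positivity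
    linarith
  simpa only [ha_def] using final

/-- Fubini for continuous functions on a square, interval-integral version. -/
lemma swap13 (Lp : ℝ) (hLp : 0 ≤ Lp) (F : ℝ → ℝ → ℝ)
    (hF : Continuous (fun q : ℝ × ℝ => F q.1 q.2)) :
    (∫ x in (0:ℝ)..Lp, ∫ y in (0:ℝ)..Lp, F x y)
      = ∫ y in (0:ℝ)..Lp, ∫ x in (0:ℝ)..Lp, F x y := by
  rw [intervalIntegral.integral_of_le hLp, intervalIntegral.integral_of_le hLp]
  simp_rw [intervalIntegral.integral_of_le hLp]
  apply MeasureTheory.integral_integral_swap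
  rw [Measure.prod_restrict]
  have h1 : IntegrableOn (Function.uncurry F) (Set.Icc (0:ℝ) Lp ×ˢ Set.Icc (0:ℝ) Lp) volume := by
    apply ContinuousOn.integrableOn_compact (isCompact_Icc.prod isCompact_Icc)
    exact hF.continuousOn
  have h2 := h1.mono_set (Set.prod_mono Set.Ioc_subset_Icc_self Set.Ioc_subset_Icc_self)
  rwa [IntegrableOn, Measure.volume_eq_prod] at h2


set_option maxHeartbeats 1000000 in
/-- Core 2D quadrature estimate for a periodic function with vanishing integral. -/
lemma core13 (L : ℝ) (hL : 0 < L) (F Fx Fy : ℝ → ℝ → ℝ) (MX MY : ℝ)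
    (hFc : Continuous (fun q : ℝ × ℝ => F q.1 q.2))
    (hdx : ∀ x y : ℝ, HasDerivAt (fun x => F x y) (Fx x y) x)
    (hdy : ∀ x y : ℝ, HasDerivAt (fun y => F x y) (Fy x y) y)
    (hlipx : ∀ y ∈ Set.Icc (0:ℝ) L, ∀ x1 ∈ Set.Icc (0:ℝ) L, ∀ x2 ∈ Set.Icc (0:ℝ) L,
      |Fx x1 y - Fx x2 y| ≤ MX * |x1 - x2|)
    (hlipy : ∀ x ∈ Set.Icc (0:ℝ) L, ∀ y1 ∈ Set.Icc (0:ℝ) L, ∀ y2 ∈ Set.Icc (0:ℝ) L,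
      |Fy x y1 - Fy x y2| ≤ MY * |y1 - y2|)
    (hperX : ∀ y, F L y = F 0 y) (hperY : ∀ x, F x L = F x 0)
    (hint0 : (∫ x in (0:ℝ)..L, ∫ y in (0:ℝ)..L, F x y) = 0)
    (n : ℕ) (hn : 0 < n) :
    |(L/(n:ℝ))^2 * ∑ i ∈ Finset.range n, ∑ j ∈ Finset.range n,
        F ((i:ℝ) * (L/(n:ℝ))) ((j:ℝ) * (L/(n:ℝ)))|
      ≤ 2 * (MX + MY) * L^2 * (L/(n:ℝ))^2 := by
  set h : ℝ := L / (n:ℝ) with hh_def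
  have hh : 0 < h := div_pos hL (by exact_mod_cast hn)
  have hnh : (n:ℝ) * h = L := by rw [hh_def]; field_simp
  have hFcy : ∀ x : ℝ, Continuous (fun y => F x y) :=
    fun x => hFc.comp (continuous_const.prodMk continuous_id)
  have hFcx : ∀ y : ℝ, Continuous (fun x => F x y) :=
    fun y => hFc.comp (continuous_id.prodMk continuous_const)
  have hgrid : ∀ i : ℕ, i < n → (i:ℝ) * h ∈ Set.Icc (0:ℝ) L := by
    intro i hi
    have hcasti : (i:ℝ) + 1 ≤ (n:ℝ) := by exact_mod_cast hi
    constructor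
    · exact mul_nonneg (Nat.cast_nonneg i) hh.le
    · calc (i:ℝ) * h ≤ (n:ℝ) * h := by nlinarith [hh.le]
        _ = L := hnh
  have quadX : ∀ y ∈ Set.Icc (0:ℝ) L,
      |h * ∑ i ∈ Finset.range n, F ((i:ℝ) * h) y - ∫ x in (0:ℝ)..L, F x y|
        ≤ 2 * MX * L * h^2 := by
    intro y hy
    have := riemann_err13 L hL (fun x => F x y) (fun x => Fx x y) MX
      (fun x => hdx x y) (fun x1 h1 x2 h2 => hlipx y hy x1 h1 x2 h2) (hperX y) n hn
    rw [← hh_def] at this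
    exact this
  have quadY : ∀ x ∈ Set.Icc (0:ℝ) L,
      |h * ∑ j ∈ Finset.range n, F x ((j:ℝ) * h) - ∫ y in (0:ℝ)..L, F x y|
        ≤ 2 * MY * L * h^2 := by
    intro x hx
    have := riemann_err13 L hL (fun y => F x y) (fun y => Fy x y) MY
      (fun y => hdy x y) (fun y1 h1 y2 h2 => hlipy x hx y1 h1 y2 h2) (hperY x) n hn
    rw [← hh_def] at this
    exact this
  have eA : (∫ y in (0:ℝ)..L, (h * ∑ i ∈ Finset.range n, F ((i:ℝ) * h) y))
      = h * ∑ i ∈ Finset.range n, ∫ y in (0:ℝ)..L, F ((i:ℝ) * h) y := by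
    rw [intervalIntegral.integral_const_mul]
    congr 1
    exact intervalIntegral.integral_finset_sum
      (fun i _ => (hFcy _).intervalIntegrable _ _)
  have hInnerInt : Continuous (fun y => ∫ x in (0:ℝ)..L, F x y) := by
    apply continuous_parametric_intervalIntegral_of_continuous' _ 0 L
    exact hFc.comp (continuous_snd.prodMk continuous_fst)
  have eC : (∫ y in (0:ℝ)..L,
        (h * ∑ i ∈ Finset.range n, F ((i:ℝ) * h) y - ∫ x in (0:ℝ)..L, F x y))
      = h * (∑ i ∈ Finset.range n, ∫ y in (0:ℝ)..L, F ((i:ℝ) * h) y)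
        - ∫ x in (0:ℝ)..L, ∫ y in (0:ℝ)..L, F x y := by
    have c0 : Continuous (fun y => ∑ i ∈ Finset.range n, F ((i:ℝ) * h) y) :=
      continuous_finset_sum _ (fun i _ => hFcy ((i:ℝ) * h))
    have c1 : Continuous (fun y => h * ∑ i ∈ Finset.range n, F ((i:ℝ) * h) y) :=
      continuous_const.mul c0
    have hI1 : IntervalIntegrable
        (fun y => h * ∑ i ∈ Finset.range n, F ((i:ℝ) * h) y) volume 0 L :=
      c1.intervalIntegrable _ _
    have hI2 : IntervalIntegrable (fun y => ∫ x in (0:ℝ)..L, F x y) volume 0 L :=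
      hInnerInt.intervalIntegrable _ _
    rw [intervalIntegral.integral_sub hI1 hI2, eA, swap13 L hL.le F hFc]
  have identity : h^2 * ∑ i ∈ Finset.range n, ∑ j ∈ Finset.range n, F ((i:ℝ)*h) ((j:ℝ)*h)
        - (∫ x in (0:ℝ)..L, ∫ y in (0:ℝ)..L, F x y)
      = (∑ i ∈ Finset.range n, h * (h * ∑ j ∈ Finset.range n, F ((i:ℝ)*h) ((j:ℝ)*h)
            - ∫ y in (0:ℝ)..L, F ((i:ℝ)*h) y))
        + ∫ y in (0:ℝ)..L,
            (h * ∑ i ∈ Finset.range n, F ((i:ℝ) * h) y - ∫ x in (0:ℝ)..L, F x y) := by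
    rw [eC]
    rw [Finset.sum_congr rfl (fun i (_ : i ∈ Finset.range n) => mul_sub h
      (h * ∑ j ∈ Finset.range n, F ((i:ℝ)*h) ((j:ℝ)*h)) (∫ y in (0:ℝ)..L, F ((i:ℝ)*h) y)),
      Finset.sum_sub_distrib, ← Finset.mul_sum, ← Finset.mul_sum, ← Finset.mul_sum]
    ring
  have bound1 : |∑ i ∈ Finset.range n, h * (h * ∑ j ∈ Finset.range n, F ((i:ℝ)*h) ((j:ℝ)*h)
        - ∫ y in (0:ℝ)..L, F ((i:ℝ)*h) y)|
      ≤ (n:ℝ) * (h * (2 * MY * L * h^2)) := by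
    refine le_trans (Finset.abs_sum_le_sum_abs _ _) ?_
    have hterm : ∀ i ∈ Finset.range n,
        |h * (h * ∑ j ∈ Finset.range n, F ((i:ℝ)*h) ((j:ℝ)*h)
          - ∫ y in (0:ℝ)..L, F ((i:ℝ)*h) y)| ≤ h * (2 * MY * L * h^2) := by
      intro i hi
      rw [abs_mul, abs_of_pos hh]
      exact mul_le_mul_of_nonneg_left
        (quadY ((i:ℝ)*h) (hgrid i (Finset.mem_range.mp hi))) hh.le
    refine le_trans (Finset.sum_le_sum hterm) ?_
    rw [Finset.sum_const, Finset.card_range, nsmul_eq_mul]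
  have bound2 : |∫ y in (0:ℝ)..L,
        (h * ∑ i ∈ Finset.range n, F ((i:ℝ) * h) y - ∫ x in (0:ℝ)..L, F x y)|
      ≤ 2 * MX * L * h^2 * L := by
    have hb := intervalIntegral.norm_integral_le_of_norm_le_const
      (C := 2 * MX * L * h^2)
      (f := fun y => h * ∑ i ∈ Finset.range n, F ((i:ℝ) * h) y - ∫ x in (0:ℝ)..L, F x y)
      (a := 0) (b := L) ?_
    · rw [Real.norm_eq_abs] at hb
      calc |∫ y in (0:ℝ)..L,
            (h * ∑ i ∈ Finset.range n, F ((i:ℝ) * h) y - ∫ x in (0:ℝ)..L, F x y)|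
          ≤ 2 * MX * L * h^2 * |L - 0| := hb
        _ = 2 * MX * L * h^2 * L := by rw [sub_zero, abs_of_pos hL]
    · intro y hy
      rw [Set.uIoc_of_le hL.le] at hy
      rw [Real.norm_eq_abs]
      exact quadX y ⟨hy.1.le, hy.2⟩
  have e0 : h^2 * ∑ i ∈ Finset.range n, ∑ j ∈ Finset.range n, F ((i:ℝ)*h) ((j:ℝ)*h)
      = h^2 * ∑ i ∈ Finset.range n, ∑ j ∈ Finset.range n, F ((i:ℝ)*h) ((j:ℝ)*h)
        - (∫ x in (0:ℝ)..L, ∫ y in (0:ℝ)..L, F x y) := by rw [hint0, sub_zero]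
  rw [e0, identity]
  refine le_trans (abs_add_le _ _) ?_
  refine le_trans (add_le_add bound1 bound2) ?_
  have hMX0 : 0 ≤ MX := by
    have h1 := hlipx 0 (Set.left_mem_Icc.mpr hL.le) 0 (Set.left_mem_Icc.mpr hL.le)
      L (Set.right_mem_Icc.mpr hL.le)
    have h2 : |(0:ℝ) - L| = L := by rw [abs_sub_comm]; simp [abs_of_pos hL]
    nlinarith [abs_nonneg (Fx 0 0 - Fx L 0)]
  have hMY0 : 0 ≤ MY := by
    have h1 := hlipy 0 (Set.left_mem_Icc.mpr hL.le) 0 (Set.left_mem_Icc.mpr hL.le)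
      L (Set.right_mem_Icc.mpr hL.le)
    have h2 : |(0:ℝ) - L| = L := by rw [abs_sub_comm]; simp [abs_of_pos hL]
    nlinarith [abs_nonneg (Fy 0 0 - Fy 0 L)]
  have en : (n:ℝ) * (h * (2 * MY * L * h^2)) = 2 * MY * L^2 * h^2 := by
    rw [← hnh]; ring
  have em : 2 * MX * L * h^2 * L = 2 * MX * L^2 * h^2 := by ring
  rw [en, em]
  nlinarith [sq_nonneg h, sq_nonneg L, mul_nonneg hMX0 (mul_nonneg (sq_nonneg L) (sq_nonneg h)),
    mul_nonneg hMY0 (mul_nonneg (sq_nonneg L) (sq_nonneg h))]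

set_option maxHeartbeats 1000000 in
/-- Estimate (3.5) (eq:factor, second part): for a smooth spatially periodic `p`
whose spatial integral is constant in time, the periodic trapezoidal sums
`T_h(t) = h² ∑_{i,j} p(t, xᵢ, yⱼ)` satisfy `|T_h(t') − T_h(t)| ≤ C |t' − t| h²`
with `C` independent of the grid and of `t, t' ∈ [0,T]`. -/
theorem stmt13 (L T : ℝ) (hL : 0 < L) (hT : 0 < T)
    (p : ℝ → ℝ → ℝ → ℝ)
    (hsmooth : ContDiff ℝ 3 (fun q : ℝ × ℝ × ℝ => p q.1 q.2.1 q.2.2))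
    (hperx : ∀ t x y, p t (x + L) y = p t x y)
    (hpery : ∀ t x y, p t x (y + L) = p t x y)
    (hmass : ∀ t s : ℝ,
      (∫ x in (0:ℝ)..L, ∫ y in (0:ℝ)..L, p t x y)
        = ∫ x in (0:ℝ)..L, ∫ y in (0:ℝ)..L, p s x y) :
    ∃ C > 0, ∀ (N : ℕ) (t t' : ℝ), t ∈ Set.Icc 0 T → t' ∈ Set.Icc 0 T →
      |(L / (N + 1 : ℝ)) ^ 2 * ∑ i : Fin (N + 1), ∑ j : Fin (N + 1),
          p t' ((i : ℕ) * (L / (N + 1 : ℝ))) ((j : ℕ) * (L / (N + 1 : ℝ)))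
        - (L / (N + 1 : ℝ)) ^ 2 * ∑ i : Fin (N + 1), ∑ j : Fin (N + 1),
          p t ((i : ℕ) * (L / (N + 1 : ℝ))) ((j : ℕ) * (L / (N + 1 : ℝ)))|
      ≤ C * |t' - t| * (L / (N + 1 : ℝ)) ^ 2 := by
  classical
  set P : ℝ × ℝ × ℝ → ℝ := fun q => p q.1 q.2.1 q.2.2 with hP_def
  have hP : ContDiff ℝ 3 P := hsmooth
  have key : ∀ (g : ℝ×ℝ×ℝ → ℝ), Differentiable ℝ g → ∀ (c : ℝ → ℝ×ℝ×ℝ) (v : ℝ×ℝ×ℝ) (s : ℝ),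
      HasDerivAt c v s → HasDerivAt (fun u => g (c u)) (fderiv ℝ g (c s) v) s := by
    intro g hg c v s hc
    exact (hg (c s)).hasFDerivAt.comp_hasDerivAt s hc
  have hlinex : ∀ (t y x : ℝ), HasDerivAt (fun u => ((t,u,y) : ℝ×ℝ×ℝ)) ((0,1,0) : ℝ×ℝ×ℝ) x :=
    fun t y x => HasDerivAt.prodMk (hasDerivAt_const x t) (HasDerivAt.prodMk (hasDerivAt_id x) (hasDerivAt_const x y))
  have hliney : ∀ (t x y : ℝ), HasDerivAt (fun u => ((t,x,u) : ℝ×ℝ×ℝ)) ((0,0,1) : ℝ×ℝ×ℝ) y :=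
    fun t x y => HasDerivAt.prodMk (hasDerivAt_const y t) (HasDerivAt.prodMk (hasDerivAt_const y x) (hasDerivAt_id y))
  have hlinet : ∀ (x y t : ℝ), HasDerivAt (fun u => ((u,x,y) : ℝ×ℝ×ℝ)) ((1,0,0) : ℝ×ℝ×ℝ) t :=
    fun x y t => HasDerivAt.prodMk (hasDerivAt_id t) (HasDerivAt.prodMk (hasDerivAt_const t x) (hasDerivAt_const t y))
  -- x-direction partials
  set px : ℝ×ℝ×ℝ → ℝ := fun q => fderiv ℝ P q (0,1,0) with hpx_def
  set pxx : ℝ×ℝ×ℝ → ℝ := fun q => fderiv ℝ px q (0,1,0) with hpxx_def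
  set ptxx : ℝ×ℝ×ℝ → ℝ := fun q => fderiv ℝ pxx q (1,0,0) with hptxx_def
  have hpx : ContDiff ℝ 2 px := (hP.fderiv_right (by norm_num)).clm_apply contDiff_const
  have hpxx : ContDiff ℝ 1 pxx := (hpx.fderiv_right (by norm_num)).clm_apply contDiff_const
  have hptxx : Continuous ptxx :=
    ((hpxx.fderiv_right (m := 0) (by norm_num)).clm_apply contDiff_const).continuous
  have hdx : ∀ t x y : ℝ, HasDerivAt (fun u => p t u y) (px (t,x,y)) x :=
    fun t x y => key P (hP.differentiable (by norm_num)) _ _ x (hlinex t y x)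
  have hdxx : ∀ t x y : ℝ, HasDerivAt (fun u => px (t,u,y)) (pxx (t,x,y)) x :=
    fun t x y => key px (hpx.differentiable (by norm_num)) _ _ x (hlinex t y x)
  have hdtxx : ∀ t x y : ℝ, HasDerivAt (fun u => pxx (u,x,y)) (ptxx (t,x,y)) t :=
    fun t x y => key pxx (hpxx.differentiable (by norm_num)) _ _ t (hlinet x y t)
  -- y-direction partials
  set py : ℝ×ℝ×ℝ → ℝ := fun q => fderiv ℝ P q (0,0,1) with hpy_def
  set pyy : ℝ×ℝ×ℝ → ℝ := fun q => fderiv ℝ py q (0,0,1) with hpyy_def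
  set ptyy : ℝ×ℝ×ℝ → ℝ := fun q => fderiv ℝ pyy q (1,0,0) with hptyy_def
  have hpy : ContDiff ℝ 2 py := (hP.fderiv_right (by norm_num)).clm_apply contDiff_const
  have hpyy : ContDiff ℝ 1 pyy := (hpy.fderiv_right (by norm_num)).clm_apply contDiff_const
  have hptyy : Continuous ptyy :=
    ((hpyy.fderiv_right (m := 0) (by norm_num)).clm_apply contDiff_const).continuous
  have hdy : ∀ t x y : ℝ, HasDerivAt (fun u => p t x u) (py (t,x,y)) y :=
    fun t x y => key P (hP.differentiable (by norm_num)) _ _ y (hliney t x y)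
  have hdyy : ∀ t x y : ℝ, HasDerivAt (fun u => py (t,x,u)) (pyy (t,x,y)) y :=
    fun t x y => key py (hpy.differentiable (by norm_num)) _ _ y (hliney t x y)
  have hdtyy : ∀ t x y : ℝ, HasDerivAt (fun u => pyy (u,x,y)) (ptyy (t,x,y)) t :=
    fun t x y => key pyy (hpyy.differentiable (by norm_num)) _ _ t (hlinet x y t)
  -- bounds on the compact box
  set K : Set (ℝ×ℝ×ℝ) := Set.Icc 0 T ×ˢ (Set.Icc 0 L ×ˢ Set.Icc 0 L) with hK_def
  have hKc : IsCompact K := isCompact_Icc.prod (isCompact_Icc.prod isCompact_Icc)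
  obtain ⟨M1, hM1⟩ := hKc.exists_bound_of_continuousOn hptxx.continuousOn
  obtain ⟨M2, hM2⟩ := hKc.exists_bound_of_continuousOn hptyy.continuousOn
  set M1' : ℝ := max M1 0 with hM1'_def
  set M2' : ℝ := max M2 0 with hM2'_def
  have hM1'0 : 0 ≤ M1' := le_max_right _ _
  have hM2'0 : 0 ≤ M2' := le_max_right _ _
  have hM1' : ∀ q ∈ K, |ptxx q| ≤ M1' := by
    intro q hq
    calc |ptxx q| = ‖ptxx q‖ := rfl
      _ ≤ M1 := hM1 q hq
      _ ≤ M1' := le_max_left _ _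
  have hM2' : ∀ q ∈ K, |ptyy q| ≤ M2' := by
    intro q hq
    calc |ptyy q| = ‖ptyy q‖ := rfl
      _ ≤ M2 := hM2 q hq
      _ ≤ M2' := le_max_left _ _
  refine ⟨2 * L^2 * (M1' + M2') + 1, by positivity, ?_⟩
  intro N t t' ht ht'
  set n : ℕ := N + 1 with hn_def
  have hn : 0 < n := Nat.succ_pos N
  have hcast : ((N:ℝ) + 1) = (n:ℝ) := by rw [hn_def]; push_cast; ring
  rw [hcast]
  set F : ℝ → ℝ → ℝ := fun x y => p t' x y - p t x y with hF_def
  set Fx : ℝ → ℝ → ℝ := fun x y => px (t',x,y) - px (t,x,y) with hFx_def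
  set Fy : ℝ → ℝ → ℝ := fun x y => py (t',x,y) - py (t,x,y) with hFy_def
  -- continuity facts
  have hcp : ∀ s : ℝ, Continuous (fun q : ℝ×ℝ => p s q.1 q.2) := by
    intro s
    exact hP.continuous.comp (continuous_const.prodMk (continuous_fst.prodMk continuous_snd))
  have hFc : Continuous (fun q : ℝ×ℝ => F q.1 q.2) := (hcp t').sub (hcp t)
  have hdxF : ∀ x y : ℝ, HasDerivAt (fun x => F x y) (Fx x y) x :=
    fun x y => (hdx t' x y).sub (hdx t x y)
  have hdyF : ∀ x y : ℝ, HasDerivAt (fun y => F x y) (Fy x y) y :=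
    fun x y => (hdy t' x y).sub (hdy t x y)
  -- Lipschitz bounds
  have hlipx : ∀ y ∈ Set.Icc (0:ℝ) L, ∀ x1 ∈ Set.Icc (0:ℝ) L, ∀ x2 ∈ Set.Icc (0:ℝ) L,
      |Fx x1 y - Fx x2 y| ≤ (M1' * |t' - t|) * |x1 - x2| := by
    intro y hy x1 hx1 x2 hx2
    have hC : ∀ x ∈ Set.Icc (0:ℝ) L, |pxx (t',x,y) - pxx (t,x,y)| ≤ M1' * |t' - t| := by
      intro x hx
      exact mvt_bound13 (g := fun s => pxx (s,x,y)) (g' := fun s => ptxx (s,x,y))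
        (fun s _ => hdtxx s x y)
        (fun s hs => hM1' (s,x,y) ⟨hs, hx, hy⟩) ht ht'
    exact mvt_bound13 (g := fun x => px (t',x,y) - px (t,x,y))
      (g' := fun x => pxx (t',x,y) - pxx (t,x,y))
      (fun x _ => (hdxx t' x y).sub (hdxx t x y)) hC hx2 hx1
  have hlipy : ∀ x ∈ Set.Icc (0:ℝ) L, ∀ y1 ∈ Set.Icc (0:ℝ) L, ∀ y2 ∈ Set.Icc (0:ℝ) L,
      |Fy x y1 - Fy x y2| ≤ (M2' * |t' - t|) * |y1 - y2| := by
    intro x hx y1 hy1 y2 hy2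
    have hC : ∀ y ∈ Set.Icc (0:ℝ) L, |pyy (t',x,y) - pyy (t,x,y)| ≤ M2' * |t' - t| := by
      intro y hy
      exact mvt_bound13 (g := fun s => pyy (s,x,y)) (g' := fun s => ptyy (s,x,y))
        (fun s _ => hdtyy s x y)
        (fun s hs => hM2' (s,x,y) ⟨hs, hx, hy⟩) ht ht'
    exact mvt_bound13 (g := fun y => py (t',x,y) - py (t,x,y))
      (g' := fun y => pyy (t',x,y) - pyy (t,x,y))
      (fun y _ => (hdyy t' x y).sub (hdyy t x y)) hC hy2 hy1
  -- periodicity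
  have hperX : ∀ y, F L y = F 0 y := by
    intro y
    have h1 := hperx t' 0 y
    have h2 := hperx t 0 y
    rw [zero_add] at h1 h2
    simp only [hF_def, h1, h2]
  have hperY : ∀ x, F x L = F x 0 := by
    intro x
    have h1 := hpery t' x 0
    have h2 := hpery t x 0
    rw [zero_add] at h1 h2
    simp only [hF_def, h1, h2]
  -- vanishing double integral
  have hparam : ∀ s : ℝ, Continuous (fun x => ∫ y in (0:ℝ)..L, p s x y) := by
    intro s
    exact continuous_parametric_intervalIntegral_of_continuous' (hcp s) 0 L
  have hint0 : (∫ x in (0:ℝ)..L, ∫ y in (0:ℝ)..L, F x y) = 0 := by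
    have e1 : (∫ x in (0:ℝ)..L, ∫ y in (0:ℝ)..L, F x y)
        = ∫ x in (0:ℝ)..L,
            ((∫ y in (0:ℝ)..L, p t' x y) - ∫ y in (0:ℝ)..L, p t x y) := by
      apply intervalIntegral.integral_congr
      intro x _
      have c1 : Continuous (fun y => p t' x y) :=
        (hcp t').comp (continuous_const.prodMk continuous_id)
      have c2 : Continuous (fun y => p t x y) :=
        (hcp t).comp (continuous_const.prodMk continuous_id)
      exact intervalIntegral.integral_sub (c1.intervalIntegrable _ _) (c2.intervalIntegrable _ _)
    rw [e1, intervalIntegral.integral_sub ((hparam t').intervalIntegrable _ _)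
      ((hparam t).intervalIntegrable _ _), hmass t' t, sub_self]
  -- apply the core estimate
  have hcore := core13 L hL F Fx Fy (M1' * |t' - t|) (M2' * |t' - t|)
    hFc hdxF hdyF hlipx hlipy hperX hperY hint0 n hn
  -- rewrite the goal
  have egoal : (L/(n:ℝ))^2 * (∑ i : Fin n, ∑ j : Fin n,
        p t' ((i:ℕ) * (L/(n:ℝ))) ((j:ℕ) * (L/(n:ℝ))))
        - (L/(n:ℝ))^2 * (∑ i : Fin n, ∑ j : Fin n,
        p t ((i:ℕ) * (L/(n:ℝ))) ((j:ℕ) * (L/(n:ℝ))))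
      = (L/(n:ℝ))^2 * ∑ i ∈ Finset.range n, ∑ j ∈ Finset.range n,
        F ((i:ℝ) * (L/(n:ℝ))) ((j:ℝ) * (L/(n:ℝ))) := by
    rw [← mul_sub, ← Finset.sum_sub_distrib]
    simp only [hF_def, ← Finset.sum_sub_distrib]
    congr 1
    rw [Fin.sum_univ_eq_sum_range (fun i : ℕ => ∑ j : Fin n,
      (p t' ((i:ℝ) * (L/(n:ℝ))) (((j:ℕ):ℝ) * (L/(n:ℝ)))
        - p t ((i:ℝ) * (L/(n:ℝ))) (((j:ℕ):ℝ) * (L/(n:ℝ))))) n]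
    refine Finset.sum_congr rfl (fun i _ => ?_)
    rw [Fin.sum_univ_eq_sum_range (fun j : ℕ =>
      (p t' ((i:ℝ) * (L/(n:ℝ))) ((j:ℝ) * (L/(n:ℝ)))
        - p t ((i:ℝ) * (L/(n:ℝ))) ((j:ℝ) * (L/(n:ℝ))))) n]
  rw [egoal]
  refine le_trans hcore ?_
  have e2 : 2 * (M1' * |t' - t| + M2' * |t' - t|) * L^2 * (L/(n:ℝ))^2
      = (2 * L^2 * (M1' + M2')) * |t' - t| * (L/(n:ℝ))^2 := by ring
  rw [e2]
  have hpos : 0 ≤ |t' - t| * (L/(n:ℝ))^2 := mul_nonneg (abs_nonneg _) (sq_nonneg _)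
  nlinarith [hpos]
end

section
/- Let w, φ be periodic grid functions on the N×N grid with ‖w‖_∞ ≤ B' and consider T = ∇⁺_h·((𝒜 e) ∇⁻_h φ) where e is a periodic grid function and 𝒜 denotes componentwise averaging (𝒜ₓ in x, 𝒜_y in y). If ‖∇⁻_h φ‖_∞ ≤ B', then for every grid function f, |⟨T, f⟩| ≤ √2 B' ‖e‖ ‖∇⁻_h f‖. -/
noncomputable def Dxm (N : ℕ) (h : ℝ) (u : ZMod N × ZMod N → ℝ) : ZMod N × ZMod N → ℝ :=
  fun p => (u p - u (p.1 - 1, p.2)) / h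

noncomputable def Dym (N : ℕ) (h : ℝ) (u : ZMod N × ZMod N → ℝ) : ZMod N × ZMod N → ℝ :=
  fun p => (u p - u (p.1, p.2 - 1)) / h

noncomputable def Dxp (N : ℕ) (h : ℝ) (u : ZMod N × ZMod N → ℝ) : ZMod N × ZMod N → ℝ :=
  fun p => (u (p.1 + 1, p.2) - u p) / h

noncomputable def Dyp (N : ℕ) (h : ℝ) (u : ZMod N × ZMod N → ℝ) : ZMod N × ZMod N → ℝ :=
  fun p => (u (p.1, p.2 + 1) - u p) / h

noncomputable def Ax (N : ℕ) (w : ZMod N × ZMod N → ℝ) : ZMod N × ZMod N → ℝ :=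
  fun p => (w p + w (p.1 - 1, p.2)) / 2

noncomputable def Ay (N : ℕ) (w : ZMod N × ZMod N → ℝ) : ZMod N × ZMod N → ℝ :=
  fun p => (w p + w (p.1, p.2 - 1)) / 2

/-!
Summation by parts moves the outer forward difference onto `f`, turning `⟨T, f⟩` into
`-⟨(𝒜ₓe ∇ₓ⁻φ, 𝒜_y e ∇_y⁻φ), ∇⁻f⟩`. The Cauchy–Schwarz inequality for this pairing of vector
fields, the pointwise bound `|∇⁻φ| ≤ B'`, and the fact that each of the two averages is a
contraction in the discrete `L²` norm give `‖(𝒜ₓe ∇ₓ⁻φ, 𝒜_y e ∇_y⁻φ)‖² ≤ 2 B'² ‖e‖²`.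
-/

open Finset

section Permutation

variable {α : Type*} [Fintype α]

theorem sum_sub_comp_symm_div_mul (σ : Equiv.Perm α) (h : ℝ) (a f : α → ℝ) :
    ∑ p, (a (σ.symm p) - a p) / h * f p = -∑ p, a p * ((f p - f (σ p)) / h) := by
  have hshift : ∑ p, a (σ.symm p) * f p = ∑ p, a p * f (σ p) := by
    rw [← Equiv.sum_comp σ.symm (fun p => a p * f (σ p))]
    simp only [Equiv.apply_symm_apply]
  calc ∑ p, (a (σ.symm p) - a p) / h * f p
      = (∑ p, a (σ.symm p) * f p - ∑ p, a p * f p) / h := by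
        rw [← sum_sub_distrib, sum_div]
        refine sum_congr rfl fun p _ => ?_
        ring
    _ = -∑ p, a p * ((f p - f (σ p)) / h) := by
        rw [hshift, ← sum_sub_distrib, sum_div, ← sum_neg_distrib]
        refine sum_congr rfl fun p _ => ?_
        ring

theorem sum_sq_average_comp_le (σ : Equiv.Perm α) (w : α → ℝ) :
    ∑ p, ((w p + w (σ p)) / 2) ^ 2 ≤ ∑ p, w p ^ 2 :=
  calc ∑ p, ((w p + w (σ p)) / 2) ^ 2
      ≤ ∑ p, (w p ^ 2 + w (σ p) ^ 2) / 2 :=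
        sum_le_sum fun p _ => by nlinarith [sq_nonneg (w p - w (σ p))]
    _ = ∑ p, w p ^ 2 := by
        rw [← sum_div, sum_add_distrib, Equiv.sum_comp σ (fun p => w p ^ 2)]
        ring

end Permutation

theorem abs_sum_mul_add_mul_le_sqrt_mul_sqrt {α : Type*} [Fintype α] (a₁ a₂ z₁ z₂ : α → ℝ) :
    |∑ p, (a₁ p * z₁ p + a₂ p * z₂ p)|
      ≤ √(∑ p, (a₁ p ^ 2 + a₂ p ^ 2)) * √(∑ p, (z₁ p ^ 2 + z₂ p ^ 2)) := by
  -- Cauchy–Schwarz on `α ⊕ α`, where a pair of functions is a single function.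
  let A : α ⊕ α → ℝ := fun q => |Sum.elim a₁ a₂ q|
  let Z : α ⊕ α → ℝ := fun q => |Sum.elim z₁ z₂ q|
  have hcs := Real.sum_mul_le_sqrt_mul_sqrt univ A Z
  simp only [A, Z, Fintype.sum_sum_type, Sum.elim_inl, Sum.elim_inr, sq_abs,
    ← sum_add_distrib, ← abs_mul] at hcs
  exact (abs_sum_le_sum_abs _ _).trans <|
    (sum_le_sum fun p _ => abs_add_le _ _).trans hcs

section Grid

variable (N : ℕ)

-- `Dxm`, `Ax` look back along `prevX` and `Dxp` looks forward along its inverse, definitionally.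
def prevX : Equiv.Perm (ZMod N × ZMod N) := (Equiv.subRight 1).prodCongr (Equiv.refl _)

def prevY : Equiv.Perm (ZMod N × ZMod N) := (Equiv.refl _).prodCongr (Equiv.subRight 1)

variable [NeZero N]

theorem sum_Dxp_mul (h : ℝ) (a f : ZMod N × ZMod N → ℝ) :
    ∑ p, Dxp N h a p * f p = -∑ p, a p * Dxm N h f p :=
  sum_sub_comp_symm_div_mul (prevX N) h a f

theorem sum_Dyp_mul (h : ℝ) (a f : ZMod N × ZMod N → ℝ) :
    ∑ p, Dyp N h a p * f p = -∑ p, a p * Dym N h f p :=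
  sum_sub_comp_symm_div_mul (prevY N) h a f

theorem sum_sq_Ax_mul_add_sq_Ay_mul_le (B : ℝ) (e u v : ZMod N × ZMod N → ℝ)
    (huv : ∀ p, u p ^ 2 + v p ^ 2 ≤ B ^ 2) :
    ∑ p, ((Ax N e p * u p) ^ 2 + (Ay N e p * v p) ^ 2) ≤ 2 * B ^ 2 * ∑ p, e p ^ 2 := by
  have hpoint : ∀ p, (Ax N e p * u p) ^ 2 + (Ay N e p * v p) ^ 2
      ≤ B ^ 2 * (Ax N e p ^ 2 + Ay N e p ^ 2) := fun p => by
    have hu : u p ^ 2 ≤ B ^ 2 := by nlinarith [huv p, sq_nonneg (v p)]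
    have hv : v p ^ 2 ≤ B ^ 2 := by nlinarith [huv p, sq_nonneg (u p)]
    nlinarith [mul_le_mul_of_nonneg_left hu (sq_nonneg (Ax N e p)),
      mul_le_mul_of_nonneg_left hv (sq_nonneg (Ay N e p))]
  have hAx : ∑ p, Ax N e p ^ 2 ≤ ∑ p, e p ^ 2 := sum_sq_average_comp_le (prevX N) e
  have hAy : ∑ p, Ay N e p ^ 2 ≤ ∑ p, e p ^ 2 := sum_sq_average_comp_le (prevY N) e
  calc ∑ p, ((Ax N e p * u p) ^ 2 + (Ay N e p * v p) ^ 2)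
      ≤ ∑ p, B ^ 2 * (Ax N e p ^ 2 + Ay N e p ^ 2) := sum_le_sum fun p _ => hpoint p
    _ = B ^ 2 * (∑ p, Ax N e p ^ 2 + ∑ p, Ay N e p ^ 2) := by rw [← mul_sum, sum_add_distrib]
    _ ≤ 2 * B ^ 2 * ∑ p, e p ^ 2 := by nlinarith [sq_nonneg B]

end Grid

theorem stmt14_general (N : ℕ) [NeZero N] (h B' : ℝ) (hB : 0 ≤ B')
    (e φ f : ZMod N × ZMod N → ℝ)
    (hφ : ∀ p : ZMod N × ZMod N, (Dxm N h φ p) ^ 2 + (Dym N h φ p) ^ 2 ≤ B' ^ 2) :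
    |h ^ 2 * ∑ p : ZMod N × ZMod N,
        (Dxp N h (fun r => Ax N e r * Dxm N h φ r) p
          + Dyp N h (fun r => Ay N e r * Dym N h φ r) p) * f p|
      ≤ Real.sqrt 2 * B' * Real.sqrt (h ^ 2 * ∑ p : ZMod N × ZMod N, e p ^ 2)
          * Real.sqrt (h ^ 2 * ∑ p : ZMod N × ZMod N,
              ((Dxm N h f p) ^ 2 + (Dym N h f p) ^ 2)) := by
  set a := fun r => Ax N e r * Dxm N h φ r
  set b := fun r => Ay N e r * Dym N h φ r
  set E := ∑ p, e p ^ 2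
  set F := ∑ p, ((Dxm N h f p) ^ 2 + (Dym N h f p) ^ 2)
  have hparts : ∑ p, (Dxp N h a p + Dyp N h b p) * f p
      = -∑ p, (a p * Dxm N h f p + b p * Dym N h f p) := by
    rw [sum_congr rfl fun p _ => add_mul _ _ _, sum_add_distrib, sum_Dxp_mul, sum_Dyp_mul,
      sum_add_distrib, neg_add]
  have hflux : √(∑ p, (a p ^ 2 + b p ^ 2)) ≤ √2 * B' * √E := by
    rw [← Real.sqrt_sq hB, ← Real.sqrt_mul zero_le_two, ← Real.sqrt_mul (by positivity)]
    exact Real.sqrt_le_sqrt (sum_sq_Ax_mul_add_sq_Ay_mul_le N B' e _ _ hφ)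
  rw [hparts, abs_mul, abs_neg, abs_of_nonneg (sq_nonneg h),
    Real.sqrt_mul' _ (sum_nonneg fun p _ => sq_nonneg _),
    Real.sqrt_mul' _ (sum_nonneg fun p _ => by positivity), Real.sqrt_sq_eq_abs]
  calc h ^ 2 * |∑ p, (a p * Dxm N h f p + b p * Dym N h f p)|
      ≤ h ^ 2 * (√(∑ p, (a p ^ 2 + b p ^ 2)) * √F) := by
        gcongr
        exact abs_sum_mul_add_mul_le_sqrt_mul_sqrt a b _ _
    _ ≤ h ^ 2 * (√2 * B' * √E * √F) := by gcongr
    _ = √2 * B' * (|h| * √E) * (|h| * √F) := by rw [← sq_abs h]; ring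

/-- Core estimate in Lemma 3.5 (lemma:non): with `T = ∇⁺_h·((𝒜 e) ∇⁻_h φ)` and
`‖∇⁻_h φ‖_∞ ≤ B'`, for every grid function `f`,
`|⟨T, f⟩| ≤ √2 B' ‖e‖ ‖∇⁻_h f‖`. -/
theorem stmt14 (N : ℕ) [NeZero N] (h B' : ℝ) (hh : 0 < h) (hB : 0 ≤ B')
    (e φ f : ZMod N × ZMod N → ℝ)
    (hφ : ∀ p : ZMod N × ZMod N, (Dxm N h φ p) ^ 2 + (Dym N h φ p) ^ 2 ≤ B' ^ 2) :
    |h ^ 2 * ∑ p : ZMod N × ZMod N,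
        (Dxp N h (fun r => Ax N e r * Dxm N h φ r) p
          + Dyp N h (fun r => Ay N e r * Dym N h φ r) p) * f p|
      ≤ Real.sqrt 2 * B' * Real.sqrt (h ^ 2 * ∑ p : ZMod N × ZMod N, e p ^ 2)
          * Real.sqrt (h ^ 2 * ∑ p : ZMod N × ZMod N,
              ((Dxm N h f p) ^ 2 + (Dym N h f p) ^ 2)) :=
  stmt14_general N h B' hB e φ f hφ
end

section
/- Let p, n ≥ 0 and φ be smooth periodic solutions of the PNP system p_t = Δp + ∇·(p∇φ), n_t = Δn − ∇·(n∇φ), −Δφ = p − n on a periodic box Ω, with ∫_Ω φ dx = 0. Then the electric energy E_φ(t) = ½∫_Ω |∇φ|² dx satisfies d/dt E_φ(t) = −∫_Ω ((p − n)² + (p + n)|∇φ|²) dx ≤ 0. -/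
set_option linter.unusedVariables false

open MeasureTheory intervalIntegral

namespace PNP19

abbrev E3 := ℝ × ℝ × ℝ

noncomputable def pd (v : E3) (F : E3 → ℝ) (q : E3) : ℝ := fderiv ℝ F q v

def e1 : E3 := (1,0,0)
def e2 : E3 := (0,1,0)
def e3 : E3 := (0,0,1)

lemma contDiff_pd {F : E3 → ℝ} (hF : ContDiff ℝ (⊤ : ℕ∞) F) (v : E3) :
    ContDiff ℝ (⊤ : ℕ∞) (pd v F) :=
  (hF.fderiv_right ((by simp))).clm_apply contDiff_const

lemma pd_continuous {F : E3 → ℝ} (hF : ContDiff ℝ (⊤ : ℕ∞) F) (v : E3) :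
    Continuous (pd v F) := (contDiff_pd hF v).continuous

-- section derivatives
lemma hasDerivAt_sec1 {F : E3 → ℝ} (hF : Differentiable ℝ F) (t x y : ℝ) :
    HasDerivAt (fun s => F (s, x, y)) (pd e1 F (t, x, y)) t := by
  have h : HasDerivAt (fun s : ℝ => ((s, x, y) : E3)) e1 t := by
    simpa [e1] using
      ((hasDerivAt_id t).prodMk ((hasDerivAt_const t x).prodMk (hasDerivAt_const t y)))
  exact (hF (t, x, y)).hasFDerivAt.comp_hasDerivAt t h

lemma hasDerivAt_sec2 {F : E3 → ℝ} (hF : Differentiable ℝ F) (t x y : ℝ) :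
    HasDerivAt (fun b => F (t, b, y)) (pd e2 F (t, x, y)) x := by
  have h : HasDerivAt (fun b : ℝ => ((t, b, y) : E3)) e2 x := by
    simpa [e2] using
      ((hasDerivAt_const x t).prodMk ((hasDerivAt_id x).prodMk (hasDerivAt_const x y)))
  exact (hF (t, x, y)).hasFDerivAt.comp_hasDerivAt x h

lemma hasDerivAt_sec3 {F : E3 → ℝ} (hF : Differentiable ℝ F) (t x y : ℝ) :
    HasDerivAt (fun c => F (t, x, c)) (pd e3 F (t, x, y)) y := by
  have h : HasDerivAt (fun c : ℝ => ((t, x, c) : E3)) e3 y := by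
    simpa [e3] using
      ((hasDerivAt_const y t).prodMk ((hasDerivAt_const y x).prodMk (hasDerivAt_id y)))
  exact (hF (t, x, y)).hasFDerivAt.comp_hasDerivAt y h

lemma deriv_sec1 {F : E3 → ℝ} (hF : Differentiable ℝ F) (t x y : ℝ) :
    deriv (fun s => F (s, x, y)) t = pd e1 F (t, x, y) :=
  (hasDerivAt_sec1 hF t x y).deriv

lemma deriv_sec2 {F : E3 → ℝ} (hF : Differentiable ℝ F) (t x y : ℝ) :
    deriv (fun b => F (t, b, y)) x = pd e2 F (t, x, y) :=
  (hasDerivAt_sec2 hF t x y).deriv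

lemma deriv_sec3 {F : E3 → ℝ} (hF : Differentiable ℝ F) (t x y : ℝ) :
    deriv (fun c => F (t, x, c)) y = pd e3 F (t, x, y) :=
  (hasDerivAt_sec3 hF t x y).deriv

-- arithmetic for pd
lemma pd_add {F G : E3 → ℝ} (hF : Differentiable ℝ F) (hG : Differentiable ℝ G) (v : E3) :
    pd v (fun q => F q + G q) = fun q => pd v F q + pd v G q := by
  funext q
  rw [pd, fderiv_fun_add (hF q) (hG q)]; simp [pd]

lemma pd_mul {F G : E3 → ℝ} (hF : Differentiable ℝ F) (hG : Differentiable ℝ G) (v : E3) :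
    pd v (fun q => F q * G q) = fun q => F q * pd v G q + pd v F q * G q := by
  funext q
  rw [pd, fderiv_fun_mul (hF q) (hG q)]; simp [pd, mul_comm]

lemma pd_neg {F : E3 → ℝ} (v : E3) :
    pd v (fun q => -F q) = fun q => -pd v F q := by
  funext q; simp [pd]

-- Clairaut
lemma pd_comm {F : E3 → ℝ} (hF : ContDiff ℝ (⊤ : ℕ∞) F) (v w : E3) :
    pd v (pd w F) = pd w (pd v F) := by
  funext q
  have hsymm : IsSymmSndFDerivAt ℝ F q :=
    hF.contDiffAt.isSymmSndFDerivAt (by rw [minSmoothness_of_isRCLikeNormedField]; exact WithTop.coe_le_coe.mpr le_top)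
  have hd : Differentiable ℝ (fderiv ℝ F) :=
    (hF.fderiv_right (m := (⊤ : ℕ∞)) ((by simp))).differentiable (by simp)
  have key : ∀ u u' : E3, pd u (pd u' F) q = fderiv ℝ (fderiv ℝ F) q u u' := by
    intro u u'
    have hc : HasFDerivAt (pd u' F)
        (((ContinuousLinearMap.apply ℝ ℝ u').comp (fderiv ℝ (fderiv ℝ F) q))) q :=
      (ContinuousLinearMap.apply ℝ ℝ u').hasFDerivAt.comp q (hd q).hasFDerivAt
    simp [pd, hc.fderiv]
  rw [key v w, key w v]
  exact hsymm.eq v w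


lemma pd_sub {F G : E3 → ℝ} (hF : Differentiable ℝ F) (hG : Differentiable ℝ G) (v : E3) :
    pd v (fun q => F q - G q) = fun q => pd v F q - pd v G q := by
  funext q
  rw [pd, fderiv_fun_sub (hF q) (hG q)]; simp [pd]

lemma periodic_pd {F : E3 → ℝ} (hF : Differentiable ℝ F) (c : E3)
    (hper : ∀ q, F (q + c) = F q) (v : E3) : ∀ q, pd v F (q + c) = pd v F q := by
  intro q
  have h1 : HasFDerivAt (fun x : E3 => F (x + c)) (fderiv ℝ F (q + c)) q := by
    have := (hF (q + c)).hasFDerivAt.comp q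
      ((hasFDerivAt_id q).add_const c)
    simpa [Function.comp_def] using this
  have h2 : (fun x : E3 => F (x + c)) = F := funext hper
  rw [h2] at h1
  simp [pd, h1.fderiv]

/-- smooth and `L`-periodic in the two space variables -/
def Nice (L : ℝ) (F : E3 → ℝ) : Prop :=
  ContDiff ℝ (⊤ : ℕ∞) F ∧ (∀ q, F (q + ((0:ℝ),L,0)) = F q) ∧ (∀ q, F (q + ((0:ℝ),0,L)) = F q)

namespace Nice

variable {L : ℝ} {F G : E3 → ℝ}

lemma smooth (h : Nice L F) : ContDiff ℝ (⊤ : ℕ∞) F := h.1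
lemma diff (h : Nice L F) : Differentiable ℝ F := h.1.differentiable (by simp)
lemma cont (h : Nice L F) : Continuous F := h.1.continuous

lemma pd (h : Nice L F) (v : E3) : Nice L (PNP19.pd v F) :=
  ⟨contDiff_pd h.1 v, periodic_pd h.diff _ h.2.1 v, periodic_pd h.diff _ h.2.2 v⟩

lemma add (hF : Nice L F) (hG : Nice L G) : Nice L (fun q => F q + G q) :=
  ⟨hF.1.add hG.1, fun q => by simp [hF.2.1 q, hG.2.1 q],
    fun q => by simp [hF.2.2 q, hG.2.2 q]⟩

lemma sub (hF : Nice L F) (hG : Nice L G) : Nice L (fun q => F q - G q) :=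
  ⟨hF.1.sub hG.1, fun q => by simp [hF.2.1 q, hG.2.1 q],
    fun q => by simp [hF.2.2 q, hG.2.2 q]⟩

lemma mul (hF : Nice L F) (hG : Nice L G) : Nice L (fun q => F q * G q) :=
  ⟨hF.1.mul hG.1, fun q => by simp [hF.2.1 q, hG.2.1 q],
    fun q => by simp [hF.2.2 q, hG.2.2 q]⟩

lemma neg (hF : Nice L F) : Nice L (fun q => -F q) :=
  ⟨hF.1.neg, fun q => by simp [hF.2.1 q], fun q => by simp [hF.2.2 q]⟩

end Nice

/-- 1-dimensional integration by parts for periodic functions -/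
lemma ibp1 {L : ℝ} (f g f' g' : ℝ → ℝ)
    (hf : ∀ x, HasDerivAt f (f' x) x) (hg : ∀ x, HasDerivAt g (g' x) x)
    (hf' : Continuous f') (hg' : Continuous g')
    (hfp : f L = f 0) (hgp : g L = g 0) :
    ∫ x in (0:ℝ)..L, f' x * g x = - ∫ x in (0:ℝ)..L, f x * g' x := by
  have hfc : Continuous f := by
    rw [continuous_iff_continuousAt]; exact fun x => (hf x).continuousAt
  have hgc : Continuous g := by
    rw [continuous_iff_continuousAt]; exact fun x => (hg x).continuousAt
  have h := integral_deriv_mul_eq_sub (a := 0) (b := L)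
    (fun x _ => hf x) (fun x _ => hg x)
    (hf'.intervalIntegrable 0 L) (hg'.intervalIntegrable 0 L)
  rw [hfp, hgp, sub_self] at h
  have h2 : (∫ x in (0:ℝ)..L, f' x * g x) + ∫ x in (0:ℝ)..L, f x * g' x = 0 := by
    rw [← intervalIntegral.integral_add ((hf'.fun_mul hgc).intervalIntegrable 0 L)
      ((hfc.fun_mul hg').intervalIntegrable 0 L)]
    exact h
  linarith


noncomputable def J (L t : ℝ) (H : E3 → ℝ) : ℝ :=
  ∫ x in (0:ℝ)..L, ∫ y in (0:ℝ)..L, H (t, x, y)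

lemma J_congr {L t : ℝ} {H1 H2 : E3 → ℝ} (h : ∀ q, H1 q = H2 q) :
    J L t H1 = J L t H2 := by
  have : H1 = H2 := funext h
  rw [this]

lemma cont_sec23 {H : E3 → ℝ} (hH : Continuous H) (t : ℝ) :
    Continuous (fun z : ℝ × ℝ => H (t, z.1, z.2)) := by fun_prop

lemma cont_inner {H : E3 → ℝ} (hH : Continuous H) (t L : ℝ) :
    Continuous (fun x => ∫ y in (0:ℝ)..L, H (t, x, y)) := by
  apply intervalIntegral.continuous_parametric_intervalIntegral_of_continuous'
    (f := fun x y => H (t, x, y))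
  exact cont_sec23 hH t

lemma J_add {L t : ℝ} {H1 H2 : E3 → ℝ} (h1 : Continuous H1) (h2 : Continuous H2) :
    J L t (fun q => H1 q + H2 q) = J L t H1 + J L t H2 := by
  unfold J
  have inner : ∀ x : ℝ, (∫ y in (0:ℝ)..L, (H1 (t, x, y) + H2 (t, x, y)))
      = (∫ y in (0:ℝ)..L, H1 (t, x, y)) + ∫ y in (0:ℝ)..L, H2 (t, x, y) := by
    intro x
    exact intervalIntegral.integral_add
      ((h1.comp (by fun_prop : Continuous fun y : ℝ => ((t,x,y) : E3))).intervalIntegrable 0 L)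
      ((h2.comp (by fun_prop : Continuous fun y : ℝ => ((t,x,y) : E3))).intervalIntegrable 0 L)
  rw [intervalIntegral.integral_congr (fun x _ => inner x)]
  exact intervalIntegral.integral_add
    ((cont_inner h1 t L).intervalIntegrable 0 L)
    ((cont_inner h2 t L).intervalIntegrable 0 L)

lemma J_neg {L t : ℝ} {H : E3 → ℝ} :
    J L t (fun q => -H q) = - J L t H := by
  unfold J
  simp [intervalIntegral.integral_neg]

lemma J_const_mul {L t : ℝ} (c : ℝ) {H : E3 → ℝ} :
    J L t (fun q => c * H q) = c * J L t H := by
  unfold J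
  simp [intervalIntegral.integral_const_mul]

lemma J_nonneg {L t : ℝ} (hL : 0 ≤ L) {H : E3 → ℝ} (h : ∀ q, 0 ≤ H q) :
    0 ≤ J L t H := by
  apply intervalIntegral.integral_nonneg hL
  intro x _
  exact intervalIntegral.integral_nonneg hL (fun y _ => h _)

lemma J_swap {L t : ℝ} (hL : 0 ≤ L) {H : E3 → ℝ} (hH : Continuous H) :
    J L t H = ∫ y in (0:ℝ)..L, ∫ x in (0:ℝ)..L, H (t, x, y) := by
  unfold J
  have hIoc : ∀ f : ℝ → ℝ, (∫ x in (0:ℝ)..L, f x) = ∫ x in Set.Ioc (0:ℝ) L, f x := by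
    intro f; rw [intervalIntegral.integral_of_le hL]
  rw [hIoc, hIoc]
  simp only [hIoc]
  have hint : Integrable (Function.uncurry fun x y => H (t, x, y))
      ((volume.restrict (Set.Ioc (0:ℝ) L)).prod (volume.restrict (Set.Ioc (0:ℝ) L))) := by
    rw [MeasureTheory.Measure.prod_restrict]
    have hcont : Continuous (Function.uncurry fun x y => H (t, x, y)) := by
      apply cont_sec23 hH
    have h1 : IntegrableOn (Function.uncurry fun x y => H (t, x, y))
        (Set.Icc (0:ℝ) L ×ˢ Set.Icc (0:ℝ) L) (volume.prod volume) := by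
      rw [← MeasureTheory.Measure.volume_eq_prod]
      exact hcont.continuousOn.integrableOn_compact (isCompact_Icc.prod isCompact_Icc)
    exact h1.mono_set (Set.prod_mono Set.Ioc_subset_Icc_self Set.Ioc_subset_Icc_self)
  exact MeasureTheory.integral_integral_swap hint


lemma Jibp3 {L t : ℝ} {f g : E3 → ℝ} (hf : Nice L f) (hg : Nice L g) :
    J L t (fun q => pd e3 f q * g q) = - J L t (fun q => f q * pd e3 g q) := by
  unfold J
  have inner : ∀ x : ℝ, (∫ y in (0:ℝ)..L, pd e3 f (t,x,y) * g (t,x,y))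
      = - ∫ y in (0:ℝ)..L, f (t,x,y) * pd e3 g (t,x,y) := by
    intro x
    apply ibp1 (fun c => f (t,x,c)) (fun c => g (t,x,c))
      (fun c => pd e3 f (t,x,c)) (fun c => pd e3 g (t,x,c))
      (fun c => hasDerivAt_sec3 hf.diff t x c) (fun c => hasDerivAt_sec3 hg.diff t x c)
      ((pd_continuous hf.smooth e3).comp (by fun_prop))
      ((pd_continuous hg.smooth e3).comp (by fun_prop))
    · simpa using hf.2.2 (t,x,0)
    · simpa using hg.2.2 (t,x,0)
  rw [intervalIntegral.integral_congr (g := fun x => -(∫ y in (0:ℝ)..L, f (t,x,y) * pd e3 g (t,x,y)))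
    (fun x _ => inner x), intervalIntegral.integral_neg]

lemma Jibp2 {L t : ℝ} (hL : 0 ≤ L) {f g : E3 → ℝ} (hf : Nice L f) (hg : Nice L g) :
    J L t (fun q => pd e2 f q * g q) = - J L t (fun q => f q * pd e2 g q) := by
  rw [J_swap hL ((pd_continuous hf.smooth e2).fun_mul hg.cont),
    J_swap hL (hf.cont.fun_mul (pd_continuous hg.smooth e2))]
  have inner : ∀ y : ℝ, (∫ x in (0:ℝ)..L, pd e2 f (t,x,y) * g (t,x,y))
      = - ∫ x in (0:ℝ)..L, f (t,x,y) * pd e2 g (t,x,y) := by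
    intro y
    apply ibp1 (fun b => f (t,b,y)) (fun b => g (t,b,y))
      (fun b => pd e2 f (t,b,y)) (fun b => pd e2 g (t,b,y))
      (fun b => hasDerivAt_sec2 hf.diff t b y) (fun b => hasDerivAt_sec2 hg.diff t b y)
      ((pd_continuous hf.smooth e2).comp (by fun_prop))
      ((pd_continuous hg.smooth e2).comp (by fun_prop))
    · simpa using hf.2.1 (t,0,y)
    · simpa using hg.2.1 (t,0,y)
  rw [intervalIntegral.integral_congr (g := fun y => -(∫ x in (0:ℝ)..L, f (t,x,y) * pd e2 g (t,x,y)))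
    (fun y _ => inner y), intervalIntegral.integral_neg]


open Metric in
/-- inner differentiation under the integral sign -/
lemma hasDerivAt_inner {L : ℝ} (G : E3 → ℝ) (hG : ContDiff ℝ (⊤ : ℕ∞) G) (s x : ℝ) :
    HasDerivAt (fun s' => ∫ y in (0:ℝ)..L, G (s', x, y))
      (∫ y in (0:ℝ)..L, pd e1 G (s, x, y)) s := by
  obtain ⟨C, hC⟩ : ∃ C, ∀ q ∈ (Set.Icc (s-1) (s+1) ×ˢ ({x} ×ˢ Set.uIcc (0:ℝ) L)),
      ‖pd e1 G q‖ ≤ C :=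
    (isCompact_Icc.prod (isCompact_singleton.prod isCompact_uIcc)).exists_bound_of_continuousOn
      (pd_continuous hG e1).continuousOn
  have hdiffble : Differentiable ℝ G := hG.differentiable (by simp)
  have h := intervalIntegral.hasDerivAt_integral_of_dominated_loc_of_deriv_le
    (μ := MeasureTheory.volume)
    (F := fun s' y => G (s', x, y)) (F' := fun s' y => pd e1 G (s', x, y))
    (x₀ := s) (a := 0) (b := L) (bound := fun _ => C) (s := Metric.ball s 1) (Metric.ball_mem_nhds _ one_pos)
    (Filter.Eventually.of_forall (fun s' =>
      ((hG.continuous.comp (by fun_prop : Continuous fun y : ℝ => ((s', x, y) : E3))).aestronglyMeasurable)))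
    ((hG.continuous.comp (by fun_prop : Continuous fun y : ℝ => ((s, x, y) : E3))).intervalIntegrable 0 L)
    (((pd_continuous hG e1).comp (by fun_prop : Continuous fun y : ℝ => ((s, x, y) : E3))).aestronglyMeasurable)
    (Filter.Eventually.of_forall (fun y hy s' hs' => by
      have hss := abs_lt.1 (by simpa [Real.dist_eq] using mem_ball.1 hs')
      exact hC _ ⟨Set.mem_Icc.2 ⟨by linarith [hss.1], by linarith [hss.2]⟩,
        rfl, Set.uIoc_subset_uIcc hy⟩))
    (intervalIntegrable_const)
    (Filter.Eventually.of_forall (fun y hy s' hs' => hasDerivAt_sec1 hdiffble s' x y))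
  exact h.2

open Metric in
/-- differentiation under the double integral -/
lemma hasDerivAt_double {L : ℝ} (G : E3 → ℝ) (hG : ContDiff ℝ (⊤ : ℕ∞) G) (t : ℝ) :
    HasDerivAt (fun s => J L s G) (J L t (pd e1 G)) t := by
  obtain ⟨C, hC⟩ : ∃ C, ∀ q ∈ (Set.Icc (t-1) (t+1) ×ˢ
      (Set.uIcc (0:ℝ) L ×ˢ Set.uIcc (0:ℝ) L)), ‖pd e1 G q‖ ≤ C :=
    (isCompact_Icc.prod (isCompact_uIcc.prod isCompact_uIcc)).exists_bound_of_continuousOn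
      (pd_continuous hG e1).continuousOn
  have h := intervalIntegral.hasDerivAt_integral_of_dominated_loc_of_deriv_le
    (μ := MeasureTheory.volume)
    (F := fun s x => ∫ y in (0:ℝ)..L, G (s, x, y))
    (F' := fun s x => ∫ y in (0:ℝ)..L, pd e1 G (s, x, y))
    (x₀ := t) (a := 0) (b := L) (bound := fun _ => C * |L - 0|) (s := Metric.ball t 1) (Metric.ball_mem_nhds _ one_pos)
    (Filter.Eventually.of_forall (fun s => (cont_inner hG.continuous s L).aestronglyMeasurable))
    ((cont_inner hG.continuous t L).intervalIntegrable 0 L)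
    ((cont_inner (pd_continuous hG e1) t L).aestronglyMeasurable)
    (Filter.Eventually.of_forall (fun x hx s hs => by
      have hss := abs_lt.1 (by simpa [Real.dist_eq] using mem_ball.1 hs)
      exact intervalIntegral.norm_integral_le_of_norm_le_const (fun y hy =>
        hC _ ⟨Set.mem_Icc.2 ⟨by linarith [hss.1], by linarith [hss.2]⟩,
          Set.uIoc_subset_uIcc hx, Set.uIoc_subset_uIcc hy⟩)))
    (intervalIntegrable_const)
    (Filter.Eventually.of_forall (fun x hx s hs => hasDerivAt_inner G hG s x))
  exact h.2


def unc (f : ℝ → ℝ → ℝ → ℝ) : E3 → ℝ := fun q => f q.1 q.2.1 q.2.2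

end PNP19

open PNP19 in
/-- Electric energy identity (1.6) for the continuous PNP system: for smooth
periodic solutions with `p, n ≥ 0` and `∫_Ω φ = 0`, the electric energy
`E_φ(t) = ½∫_Ω |∇φ|²` satisfies
`d/dt E_φ(t) = −∫_Ω ((p−n)² + (p+n)|∇φ|²) ≤ 0`. -/
theorem stmt19 (L : ℝ) (hL : 0 < L) (p n φ : ℝ → ℝ → ℝ → ℝ)
    (hpsm : ContDiff ℝ (⊤ : ℕ∞) (fun q : ℝ × ℝ × ℝ => p q.1 q.2.1 q.2.2))
    (hnsm : ContDiff ℝ (⊤ : ℕ∞) (fun q : ℝ × ℝ × ℝ => n q.1 q.2.1 q.2.2))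
    (hφsm : ContDiff ℝ (⊤ : ℕ∞) (fun q : ℝ × ℝ × ℝ => φ q.1 q.2.1 q.2.2))
    (hper : ∀ f ∈ ({p, n, φ} : Set (ℝ → ℝ → ℝ → ℝ)), ∀ t x y,
      f t (x + L) y = f t x y ∧ f t x (y + L) = f t x y)
    (hpnn : ∀ t x y, 0 ≤ p t x y)
    (hnnn : ∀ t x y, 0 ≤ n t x y)
    (hφmean : ∀ t, (∫ x in (0:ℝ)..L, ∫ y in (0:ℝ)..L, φ t x y) = 0)
    (hpeq : ∀ t x y,
      deriv (fun s => p s x y) t =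
        deriv (fun a => deriv (fun b => p t b y) a) x
        + deriv (fun a => deriv (fun b => p t x b) a) y
        + deriv (fun a => p t a y * deriv (fun b => φ t b y) a) x
        + deriv (fun a => p t x a * deriv (fun b => φ t x b) a) y)
    (hneq : ∀ t x y,
      deriv (fun s => n s x y) t =
        deriv (fun a => deriv (fun b => n t b y) a) x
        + deriv (fun a => deriv (fun b => n t x b) a) y
        - deriv (fun a => n t a y * deriv (fun b => φ t b y) a) x
        - deriv (fun a => n t x a * deriv (fun b => φ t x b) a) y)
    (hφeq : ∀ t x y,
      -(deriv (fun a => deriv (fun b => φ t b y) a) x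
        + deriv (fun a => deriv (fun b => φ t x b) a) y) = p t x y - n t x y) :
    ∀ t : ℝ,
      HasDerivAt
        (fun s => (1 / 2 : ℝ) * ∫ x in (0:ℝ)..L, ∫ y in (0:ℝ)..L,
          ((deriv (fun b => φ s b y) x) ^ 2 + (deriv (fun b => φ s x b) y) ^ 2))
        (-(∫ x in (0:ℝ)..L, ∫ y in (0:ℝ)..L,
          ((p t x y - n t x y) ^ 2
            + (p t x y + n t x y) *
              ((deriv (fun b => φ t b y) x) ^ 2 + (deriv (fun b => φ t x b) y) ^ 2)))) t ∧
      (-(∫ x in (0:ℝ)..L, ∫ y in (0:ℝ)..L,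
          ((p t x y - n t x y) ^ 2
            + (p t x y + n t x y) *
              ((deriv (fun b => φ t b y) x) ^ 2 + (deriv (fun b => φ t x b) y) ^ 2)))) ≤ 0 := by
  -- differentiability of everything
  have dP : Differentiable ℝ (unc p) := hpsm.differentiable (by simp)
  have dN : Differentiable ℝ (unc n) := hnsm.differentiable (by simp)
  have dPhi : Differentiable ℝ (unc φ) := hφsm.differentiable (by simp)
  have sP : ContDiff ℝ (⊤ : ℕ∞) (unc p) := hpsm
  have sN : ContDiff ℝ (⊤ : ℕ∞) (unc n) := hnsm
  have sPhi : ContDiff ℝ (⊤ : ℕ∞) (unc φ) := hφsm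
  -- bridging lemmas between curried derivatives and pd
  have bφ2 : ∀ a b c : ℝ, deriv (fun b' => φ a b' c) b = pd e2 (unc φ) (a,b,c) :=
    fun a b c => deriv_sec2 dPhi a b c
  have bφ3 : ∀ a b c : ℝ, deriv (fun c' => φ a b c') c = pd e3 (unc φ) (a,b,c) :=
    fun a b c => deriv_sec3 dPhi a b c
  have bφ22 : ∀ a b c : ℝ, deriv (fun b' => pd e2 (unc φ) (a,b',c)) b
      = pd e2 (pd e2 (unc φ)) (a,b,c) :=
    fun a b c => deriv_sec2 ((contDiff_pd sPhi e2).differentiable (by simp)) a b c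
  have bφ33 : ∀ a b c : ℝ, deriv (fun c' => pd e3 (unc φ) (a,b,c')) c
      = pd e3 (pd e3 (unc φ)) (a,b,c) :=
    fun a b c => deriv_sec3 ((contDiff_pd sPhi e3).differentiable (by simp)) a b c
  have bp1 : ∀ a b c : ℝ, deriv (fun s => p s b c) a = pd e1 (unc p) (a,b,c) :=
    fun a b c => deriv_sec1 dP a b c
  have bp2 : ∀ a b c : ℝ, deriv (fun b' => p a b' c) b = pd e2 (unc p) (a,b,c) :=
    fun a b c => deriv_sec2 dP a b c
  have bp3 : ∀ a b c : ℝ, deriv (fun c' => p a b c') c = pd e3 (unc p) (a,b,c) :=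
    fun a b c => deriv_sec3 dP a b c
  have bp22 : ∀ a b c : ℝ, deriv (fun b' => pd e2 (unc p) (a,b',c)) b
      = pd e2 (pd e2 (unc p)) (a,b,c) :=
    fun a b c => deriv_sec2 ((contDiff_pd sP e2).differentiable (by simp)) a b c
  have bp33 : ∀ a b c : ℝ, deriv (fun c' => pd e3 (unc p) (a,b,c')) c
      = pd e3 (pd e3 (unc p)) (a,b,c) :=
    fun a b c => deriv_sec3 ((contDiff_pd sP e3).differentiable (by simp)) a b c
  have bpu2 : ∀ a b c : ℝ, deriv (fun b' => p a b' c * pd e2 (unc φ) (a,b',c)) b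
      = pd e2 (fun r => unc p r * pd e2 (unc φ) r) (a,b,c) :=
    fun a b c => deriv_sec2 ((sP.mul (contDiff_pd sPhi e2)).differentiable (by simp)) a b c
  have bpu3 : ∀ a b c : ℝ, deriv (fun c' => p a b c' * pd e3 (unc φ) (a,b,c')) c
      = pd e3 (fun r => unc p r * pd e3 (unc φ) r) (a,b,c) :=
    fun a b c => deriv_sec3 ((sP.mul (contDiff_pd sPhi e3)).differentiable (by simp)) a b c
  have bn1 : ∀ a b c : ℝ, deriv (fun s => n s b c) a = pd e1 (unc n) (a,b,c) :=
    fun a b c => deriv_sec1 dN a b c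
  have bn2 : ∀ a b c : ℝ, deriv (fun b' => n a b' c) b = pd e2 (unc n) (a,b,c) :=
    fun a b c => deriv_sec2 dN a b c
  have bn3 : ∀ a b c : ℝ, deriv (fun c' => n a b c') c = pd e3 (unc n) (a,b,c) :=
    fun a b c => deriv_sec3 dN a b c
  have bn22 : ∀ a b c : ℝ, deriv (fun b' => pd e2 (unc n) (a,b',c)) b
      = pd e2 (pd e2 (unc n)) (a,b,c) :=
    fun a b c => deriv_sec2 ((contDiff_pd sN e2).differentiable (by simp)) a b c
  have bn33 : ∀ a b c : ℝ, deriv (fun c' => pd e3 (unc n) (a,b,c')) c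
      = pd e3 (pd e3 (unc n)) (a,b,c) :=
    fun a b c => deriv_sec3 ((contDiff_pd sN e3).differentiable (by simp)) a b c
  have bnu2 : ∀ a b c : ℝ, deriv (fun b' => n a b' c * pd e2 (unc φ) (a,b',c)) b
      = pd e2 (fun r => unc n r * pd e2 (unc φ) r) (a,b,c) :=
    fun a b c => deriv_sec2 ((sN.mul (contDiff_pd sPhi e2)).differentiable (by simp)) a b c
  have bnu3 : ∀ a b c : ℝ, deriv (fun c' => n a b c' * pd e3 (unc φ) (a,b,c')) c
      = pd e3 (fun r => unc n r * pd e3 (unc φ) r) (a,b,c) :=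
    fun a b c => deriv_sec3 ((sN.mul (contDiff_pd sPhi e3)).differentiable (by simp)) a b c
  -- translated PDE hypotheses
  have hφeq' : ∀ q : E3, -(pd e2 (pd e2 (unc φ)) q + pd e3 (pd e3 (unc φ)) q)
      = unc p q - unc n q := by
    rintro ⟨a,b,c⟩
    have h := hφeq a b c
    simp only [bφ2, bφ3, bφ22, bφ33] at h
    exact h
  have hpeq' : ∀ q : E3, pd e1 (unc p) q =
      pd e2 (pd e2 (unc p)) q + pd e3 (pd e3 (unc p)) q
      + pd e2 (fun r => unc p r * pd e2 (unc φ) r) q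
      + pd e3 (fun r => unc p r * pd e3 (unc φ) r) q := by
    rintro ⟨a,b,c⟩
    have h := hpeq a b c
    simp only [bφ2, bφ3, bp2, bp3] at h
    simp only [bp1, bp22, bp33, bpu2, bpu3] at h
    exact h
  have hneq' : ∀ q : E3, pd e1 (unc n) q =
      pd e2 (pd e2 (unc n)) q + pd e3 (pd e3 (unc n)) q
      - pd e2 (fun r => unc n r * pd e2 (unc φ) r) q
      - pd e3 (fun r => unc n r * pd e3 (unc φ) r) q := by
    rintro ⟨a,b,c⟩
    have h := hneq a b c
    simp only [bφ2, bφ3, bn2, bn3] at h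
    simp only [bn1, bn22, bn33, bnu2, bnu3] at h
    exact h
  -- Nice instances
  have nPhi : Nice L (unc φ) := by
    refine ⟨sPhi, ?_, ?_⟩ <;> rintro ⟨a,b,c⟩
    · show φ (a+0) (b+L) (c+0) = φ a b c
      rw [add_zero, add_zero]; exact (hper φ (by simp) a b c).1
    · show φ (a+0) (b+0) (c+L) = φ a b c
      rw [add_zero, add_zero]; exact (hper φ (by simp) a b c).2
  have nP : Nice L (unc p) := by
    refine ⟨sP, ?_, ?_⟩ <;> rintro ⟨a,b,c⟩
    · show p (a+0) (b+L) (c+0) = p a b c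
      rw [add_zero, add_zero]; exact (hper p (by simp) a b c).1
    · show p (a+0) (b+0) (c+L) = p a b c
      rw [add_zero, add_zero]; exact (hper p (by simp) a b c).2
  have nN : Nice L (unc n) := by
    refine ⟨sN, ?_, ?_⟩ <;> rintro ⟨a,b,c⟩
    · show n (a+0) (b+L) (c+0) = n a b c
      rw [add_zero, add_zero]; exact (hper n (by simp) a b c).1
    · show n (a+0) (b+0) (c+L) = n a b c
      rw [add_zero, add_zero]; exact (hper n (by simp) a b c).2
  have nU : Nice L (pd e2 (unc φ)) := nPhi.pd e2
  have nV : Nice L (pd e3 (unc φ)) := nPhi.pd e3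
  have nW : Nice L (pd e1 (unc φ)) := nPhi.pd e1
  have nDD : Nice L (fun r => unc p r - unc n r) := nP.sub nN
  have nSU : Nice L (fun r => (unc p r + unc n r) * pd e2 (unc φ) r) := (nP.add nN).mul nU
  have nSV : Nice L (fun r => (unc p r + unc n r) * pd e3 (unc φ) r) := (nP.add nN).mul nV
  intro t
  -- pointwise derivative of the energy integrand
  have hGd : ∀ q : E3, pd e1 (fun r => pd e2 (unc φ) r ^ 2 + pd e3 (unc φ) r ^ 2) q
      = 2*(pd e2 (pd e1 (unc φ)) q * pd e2 (unc φ) q)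
        + 2*(pd e3 (pd e1 (unc φ)) q * pd e3 (unc φ) q) := by
    intro q
    have hGsq : (fun r => pd e2 (unc φ) r ^ 2 + pd e3 (unc φ) r ^ 2)
        = (fun r => pd e2 (unc φ) r * pd e2 (unc φ) r + pd e3 (unc φ) r * pd e3 (unc φ) r) :=
      funext fun r => by ring
    calc pd e1 (fun r => pd e2 (unc φ) r ^ 2 + pd e3 (unc φ) r ^ 2) q
        = pd e1 (fun r => pd e2 (unc φ) r * pd e2 (unc φ) r
            + pd e3 (unc φ) r * pd e3 (unc φ) r) q := by rw [hGsq]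
      _ = pd e1 (fun r => pd e2 (unc φ) r * pd e2 (unc φ) r) q
            + pd e1 (fun r => pd e3 (unc φ) r * pd e3 (unc φ) r) q :=
          congrFun (pd_add ((nU.mul nU).diff) ((nV.mul nV).diff) e1) q
      _ = (pd e2 (unc φ) q * pd e1 (pd e2 (unc φ)) q
            + pd e1 (pd e2 (unc φ)) q * pd e2 (unc φ) q)
          + (pd e3 (unc φ) q * pd e1 (pd e3 (unc φ)) q
            + pd e1 (pd e3 (unc φ)) q * pd e3 (unc φ) q) :=
          congrArg₂ (· + ·) (congrFun (pd_mul nU.diff nU.diff e1) q)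
            (congrFun (pd_mul nV.diff nV.diff e1) q)
      _ = 2*(pd e2 (pd e1 (unc φ)) q * pd e2 (unc φ) q)
            + 2*(pd e3 (pd e1 (unc φ)) q * pd e3 (unc φ) q) := by
          rw [pd_comm sPhi e1 e2, pd_comm sPhi e1 e3]; ring
  -- key mixed-derivative identity
  have keyt : ∀ q : E3, pd e1 (unc p) q - pd e1 (unc n) q
      = -(pd e2 (pd e2 (pd e1 (unc φ))) q + pd e3 (pd e3 (pd e1 (unc φ))) q) := by
    intro q
    have hDfun : (fun r => unc p r - unc n r)
        = (fun r => -(pd e2 (pd e2 (unc φ)) r + pd e3 (pd e3 (unc φ)) r)) :=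
      funext fun r => (hφeq' r).symm
    calc pd e1 (unc p) q - pd e1 (unc n) q
        = pd e1 (fun r => unc p r - unc n r) q := (congrFun (pd_sub dP dN e1) q).symm
      _ = pd e1 (fun r => -(pd e2 (pd e2 (unc φ)) r + pd e3 (pd e3 (unc φ)) r)) q := by
          rw [hDfun]
      _ = -(pd e1 (fun r => pd e2 (pd e2 (unc φ)) r + pd e3 (pd e3 (unc φ)) r) q) :=
          congrFun (pd_neg e1) q
      _ = -(pd e1 (pd e2 (pd e2 (unc φ))) q + pd e1 (pd e3 (pd e3 (unc φ))) q) :=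
          congrArg Neg.neg (congrFun (pd_add ((nU.pd e2).diff) ((nV.pd e3).diff) e1) q)
      _ = -(pd e2 (pd e2 (pd e1 (unc φ))) q + pd e3 (pd e3 (pd e1 (unc φ))) q) := by
          rw [pd_comm (contDiff_pd sPhi e2) e1 e2, pd_comm sPhi e1 e2,
            pd_comm (contDiff_pd sPhi e3) e1 e3, pd_comm sPhi e1 e3]
  -- splitting of the time derivative of p - n
  have hsplit : ∀ q : E3, pd e1 (unc p) q - pd e1 (unc n) q
      = pd e2 (pd e2 (fun r => unc p r - unc n r)) q
        + pd e3 (pd e3 (fun r => unc p r - unc n r)) q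
        + pd e2 (fun r => (unc p r + unc n r) * pd e2 (unc φ) r) q
        + pd e3 (fun r => (unc p r + unc n r) * pd e3 (unc φ) r) q := by
    intro q
    have cA : pd e2 (pd e2 (fun r => unc p r - unc n r)) q
        = pd e2 (pd e2 (unc p)) q - pd e2 (pd e2 (unc n)) q := by
      calc pd e2 (pd e2 (fun r => unc p r - unc n r)) q
          = pd e2 (fun r => pd e2 (unc p) r - pd e2 (unc n) r) q := by
            rw [pd_sub dP dN e2]
        _ = pd e2 (pd e2 (unc p)) q - pd e2 (pd e2 (unc n)) q :=
            congrFun (pd_sub ((nP.pd e2).diff) ((nN.pd e2).diff) e2) q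
    have cB : pd e3 (pd e3 (fun r => unc p r - unc n r)) q
        = pd e3 (pd e3 (unc p)) q - pd e3 (pd e3 (unc n)) q := by
      calc pd e3 (pd e3 (fun r => unc p r - unc n r)) q
          = pd e3 (fun r => pd e3 (unc p) r - pd e3 (unc n) r) q := by
            rw [pd_sub dP dN e3]
        _ = pd e3 (pd e3 (unc p)) q - pd e3 (pd e3 (unc n)) q :=
            congrFun (pd_sub ((nP.pd e3).diff) ((nN.pd e3).diff) e3) q
    have cC : pd e2 (fun r => (unc p r + unc n r) * pd e2 (unc φ) r) q
        = pd e2 (fun r => unc p r * pd e2 (unc φ) r) q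
          + pd e2 (fun r => unc n r * pd e2 (unc φ) r) q := by
      have i2 : (fun r => (unc p r + unc n r) * pd e2 (unc φ) r)
          = (fun r => unc p r * pd e2 (unc φ) r + unc n r * pd e2 (unc φ) r) :=
        funext fun r => by ring
      calc pd e2 (fun r => (unc p r + unc n r) * pd e2 (unc φ) r) q
          = pd e2 (fun r => unc p r * pd e2 (unc φ) r + unc n r * pd e2 (unc φ) r) q := by
            rw [i2]
        _ = _ := congrFun (pd_add ((nP.mul nU).diff) ((nN.mul nU).diff) e2) q
    have cD : pd e3 (fun r => (unc p r + unc n r) * pd e3 (unc φ) r) q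
        = pd e3 (fun r => unc p r * pd e3 (unc φ) r) q
          + pd e3 (fun r => unc n r * pd e3 (unc φ) r) q := by
      have i3 : (fun r => (unc p r + unc n r) * pd e3 (unc φ) r)
          = (fun r => unc p r * pd e3 (unc φ) r + unc n r * pd e3 (unc φ) r) :=
        funext fun r => by ring
      calc pd e3 (fun r => (unc p r + unc n r) * pd e3 (unc φ) r) q
          = pd e3 (fun r => unc p r * pd e3 (unc φ) r + unc n r * pd e3 (unc φ) r) q := by
            rw [i3]
        _ = _ := congrFun (pd_add ((nP.mul nV).diff) ((nN.mul nV).diff) e3) q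
    rw [hpeq' q, hneq' q]
    linarith [cA, cB, cC, cD]
    -- continuity facts
  have cP : Continuous (unc p) := sP.continuous
  have cN : Continuous (unc n) := sN.continuous
  have cPhi : Continuous (unc φ) := sPhi.continuous
  have cU : Continuous (pd e2 (unc φ)) := pd_continuous sPhi e2
  have cV : Continuous (pd e3 (unc φ)) := pd_continuous sPhi e3
  have cW : Continuous (pd e1 (unc φ)) := pd_continuous sPhi e1
  have cUU : Continuous (pd e2 (pd e2 (unc φ))) := pd_continuous (contDiff_pd sPhi e2) e2
  have cVV : Continuous (pd e3 (pd e3 (unc φ))) := pd_continuous (contDiff_pd sPhi e3) e3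
  have cW2 : Continuous (pd e2 (pd e1 (unc φ))) := pd_continuous (contDiff_pd sPhi e1) e2
  have cW3 : Continuous (pd e3 (pd e1 (unc φ))) := pd_continuous (contDiff_pd sPhi e1) e3
  have cW22 : Continuous (pd e2 (pd e2 (pd e1 (unc φ)))) :=
    pd_continuous (contDiff_pd (contDiff_pd sPhi e1) e2) e2
  have cW33 : Continuous (pd e3 (pd e3 (pd e1 (unc φ)))) :=
    pd_continuous (contDiff_pd (contDiff_pd sPhi e1) e3) e3
  have cDD2 : Continuous (pd e2 (fun r => unc p r - unc n r)) :=
    pd_continuous (sP.sub sN) e2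
  have cDD3 : Continuous (pd e3 (fun r => unc p r - unc n r)) :=
    pd_continuous (sP.sub sN) e3
  have cDD22 : Continuous (pd e2 (pd e2 (fun r => unc p r - unc n r))) :=
    pd_continuous (contDiff_pd (sP.sub sN) e2) e2
  have cDD33 : Continuous (pd e3 (pd e3 (fun r => unc p r - unc n r))) :=
    pd_continuous (contDiff_pd (sP.sub sN) e3) e3
  have cSU2 : Continuous (pd e2 (fun r => (unc p r + unc n r) * pd e2 (unc φ) r)) :=
    pd_continuous ((sP.add sN).mul (contDiff_pd sPhi e2)) e2
  have cSV3 : Continuous (pd e3 (fun r => (unc p r + unc n r) * pd e3 (unc φ) r)) :=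
    pd_continuous ((sP.add sN).mul (contDiff_pd sPhi e3)) e3
  -- main chain of integral identities
  have qe1 : J L t (pd e1 (fun r => pd e2 (unc φ) r ^ 2 + pd e3 (unc φ) r ^ 2))
      = J L t (fun q => 2*(pd e2 (pd e1 (unc φ)) q * pd e2 (unc φ) q)
          + 2*(pd e3 (pd e1 (unc φ)) q * pd e3 (unc φ) q)) := J_congr hGd
  have qe1b : J L t (fun q => 2*(pd e2 (pd e1 (unc φ)) q * pd e2 (unc φ) q)
          + 2*(pd e3 (pd e1 (unc φ)) q * pd e3 (unc φ) q))
      = 2 * J L t (fun q => pd e2 (pd e1 (unc φ)) q * pd e2 (unc φ) q)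
        + 2 * J L t (fun q => pd e3 (pd e1 (unc φ)) q * pd e3 (unc φ) q) := by
    rw [J_add (continuous_const.fun_mul (cW2.fun_mul cU)) (continuous_const.fun_mul (cW3.fun_mul cV)),
      J_const_mul, J_const_mul]
  have qe2 : J L t (fun q => pd e2 (pd e1 (unc φ)) q * pd e2 (unc φ) q)
      = - J L t (fun q => pd e1 (unc φ) q * pd e2 (pd e2 (unc φ)) q) :=
    Jibp2 hL.le nW nU
  have qe3 : J L t (fun q => pd e3 (pd e1 (unc φ)) q * pd e3 (unc φ) q)
      = - J L t (fun q => pd e1 (unc φ) q * pd e3 (pd e3 (unc φ)) q) :=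
    Jibp3 nW nV
  have qe4 : J L t (fun q => pd e1 (unc φ) q * (unc p q - unc n q))
      = J L t (fun q => -(pd e1 (unc φ) q * pd e2 (pd e2 (unc φ)) q)
          + -(pd e1 (unc φ) q * pd e3 (pd e3 (unc φ)) q)) :=
    J_congr (fun q => by linear_combination (-(pd e1 (unc φ) q)) * hφeq' q)
  have qe4b : J L t (fun q => -(pd e1 (unc φ) q * pd e2 (pd e2 (unc φ)) q)
          + -(pd e1 (unc φ) q * pd e3 (pd e3 (unc φ)) q))
      = - J L t (fun q => pd e1 (unc φ) q * pd e2 (pd e2 (unc φ)) q)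
        + - J L t (fun q => pd e1 (unc φ) q * pd e3 (pd e3 (unc φ)) q) := by
    rw [J_add (cW.fun_mul cUU).fun_neg (cW.fun_mul cVV).fun_neg, J_neg, J_neg]
  have qe5 : J L t (fun q => pd e1 (unc φ) q * pd e2 (pd e2 (unc φ)) q)
      = J L t (fun q => pd e2 (pd e2 (unc φ)) q * pd e1 (unc φ) q) :=
    J_congr (fun q => mul_comm _ _)
  have qe5b : J L t (fun q => pd e2 (pd e2 (unc φ)) q * pd e1 (unc φ) q)
      = - J L t (fun q => pd e2 (unc φ) q * pd e2 (pd e1 (unc φ)) q) :=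
    Jibp2 hL.le nU nW
  have qe5c : J L t (fun q => pd e2 (unc φ) q * pd e2 (pd e1 (unc φ)) q)
      = - J L t (fun q => unc φ q * pd e2 (pd e2 (pd e1 (unc φ))) q) :=
    Jibp2 hL.le nPhi (nW.pd e2)
  have qe6 : J L t (fun q => pd e1 (unc φ) q * pd e3 (pd e3 (unc φ)) q)
      = J L t (fun q => pd e3 (pd e3 (unc φ)) q * pd e1 (unc φ) q) :=
    J_congr (fun q => mul_comm _ _)
  have qe6b : J L t (fun q => pd e3 (pd e3 (unc φ)) q * pd e1 (unc φ) q)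
      = - J L t (fun q => pd e3 (unc φ) q * pd e3 (pd e1 (unc φ)) q) :=
    Jibp3 nV nW
  have qe6c : J L t (fun q => pd e3 (unc φ) q * pd e3 (pd e1 (unc φ)) q)
      = - J L t (fun q => unc φ q * pd e3 (pd e3 (pd e1 (unc φ))) q) :=
    Jibp3 nPhi (nW.pd e3)
  have qe7 : J L t (fun q => unc φ q * (pd e1 (unc p) q - pd e1 (unc n) q))
      = J L t (fun q => -(unc φ q * pd e2 (pd e2 (pd e1 (unc φ))) q)
          + -(unc φ q * pd e3 (pd e3 (pd e1 (unc φ))) q)) :=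
    J_congr (fun q => by linear_combination (unc φ q) * keyt q)
  have qe7b : J L t (fun q => -(unc φ q * pd e2 (pd e2 (pd e1 (unc φ))) q)
          + -(unc φ q * pd e3 (pd e3 (pd e1 (unc φ))) q))
      = - J L t (fun q => unc φ q * pd e2 (pd e2 (pd e1 (unc φ))) q)
        + - J L t (fun q => unc φ q * pd e3 (pd e3 (pd e1 (unc φ))) q) := by
    rw [J_add (cPhi.fun_mul cW22).fun_neg (cPhi.fun_mul cW33).fun_neg, J_neg, J_neg]
  have qe8 : J L t (fun q => unc φ q * (pd e1 (unc p) q - pd e1 (unc n) q))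
      = J L t (fun q => unc φ q * pd e2 (pd e2 (fun r => unc p r - unc n r)) q
          + unc φ q * pd e3 (pd e3 (fun r => unc p r - unc n r)) q
          + unc φ q * pd e2 (fun r => (unc p r + unc n r) * pd e2 (unc φ) r) q
          + unc φ q * pd e3 (fun r => (unc p r + unc n r) * pd e3 (unc φ) r) q) :=
    J_congr (fun q => by rw [hsplit q]; ring)
  have qe8b : J L t (fun q => unc φ q * pd e2 (pd e2 (fun r => unc p r - unc n r)) q
          + unc φ q * pd e3 (pd e3 (fun r => unc p r - unc n r)) q
          + unc φ q * pd e2 (fun r => (unc p r + unc n r) * pd e2 (unc φ) r) q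
          + unc φ q * pd e3 (fun r => (unc p r + unc n r) * pd e3 (unc φ) r) q)
      = J L t (fun q => unc φ q * pd e2 (pd e2 (fun r => unc p r - unc n r)) q)
        + J L t (fun q => unc φ q * pd e3 (pd e3 (fun r => unc p r - unc n r)) q)
        + J L t (fun q => unc φ q * pd e2 (fun r => (unc p r + unc n r) * pd e2 (unc φ) r) q)
        + J L t (fun q => unc φ q * pd e3 (fun r => (unc p r + unc n r) * pd e3 (unc φ) r) q) := by
    rw [J_add (((cPhi.fun_mul cDD22).fun_add (cPhi.fun_mul cDD33)).fun_add (cPhi.fun_mul cSU2)) (cPhi.fun_mul cSV3),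
      J_add ((cPhi.fun_mul cDD22).fun_add (cPhi.fun_mul cDD33)) (cPhi.fun_mul cSU2),
      J_add (cPhi.fun_mul cDD22) (cPhi.fun_mul cDD33)]
  have qe9 : J L t (fun q => unc φ q * pd e2 (pd e2 (fun r => unc p r - unc n r)) q)
      = J L t (fun q => pd e2 (pd e2 (fun r => unc p r - unc n r)) q * unc φ q) :=
    J_congr (fun q => mul_comm _ _)
  have qe9b : J L t (fun q => pd e2 (pd e2 (fun r => unc p r - unc n r)) q * unc φ q)
      = - J L t (fun q => pd e2 (fun r => unc p r - unc n r) q * pd e2 (unc φ) q) :=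
    Jibp2 hL.le (nDD.pd e2) nPhi
  have qe9c : J L t (fun q => pd e2 (fun r => unc p r - unc n r) q * pd e2 (unc φ) q)
      = - J L t (fun q => (unc p q - unc n q) * pd e2 (pd e2 (unc φ)) q) :=
    Jibp2 hL.le nDD nU
  have qe10 : J L t (fun q => unc φ q * pd e3 (pd e3 (fun r => unc p r - unc n r)) q)
      = J L t (fun q => pd e3 (pd e3 (fun r => unc p r - unc n r)) q * unc φ q) :=
    J_congr (fun q => mul_comm _ _)
  have qe10b : J L t (fun q => pd e3 (pd e3 (fun r => unc p r - unc n r)) q * unc φ q)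
      = - J L t (fun q => pd e3 (fun r => unc p r - unc n r) q * pd e3 (unc φ) q) :=
    Jibp3 (nDD.pd e3) nPhi
  have qe10c : J L t (fun q => pd e3 (fun r => unc p r - unc n r) q * pd e3 (unc φ) q)
      = - J L t (fun q => (unc p q - unc n q) * pd e3 (pd e3 (unc φ)) q) :=
    Jibp3 nDD nV
  have qe11 : J L t (fun q => (unc p q - unc n q) * pd e2 (pd e2 (unc φ)) q)
        + J L t (fun q => (unc p q - unc n q) * pd e3 (pd e3 (unc φ)) q)
      = - J L t (fun q => (unc p q - unc n q) * (unc p q - unc n q)) := by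
    rw [← J_add ((cP.fun_sub cN).fun_mul cUU) ((cP.fun_sub cN).fun_mul cVV)]
    calc J L t (fun q => (unc p q - unc n q) * pd e2 (pd e2 (unc φ)) q
            + (unc p q - unc n q) * pd e3 (pd e3 (unc φ)) q)
        = J L t (fun q => -((unc p q - unc n q) * (unc p q - unc n q))) :=
          J_congr (fun q => by linear_combination (-(unc p q - unc n q)) * hφeq' q)
      _ = - J L t (fun q => (unc p q - unc n q) * (unc p q - unc n q)) := J_neg
  have qe12 : J L t (fun q => unc φ q * pd e2 (fun r => (unc p r + unc n r) * pd e2 (unc φ) r) q)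
      = J L t (fun q => pd e2 (fun r => (unc p r + unc n r) * pd e2 (unc φ) r) q * unc φ q) :=
    J_congr (fun q => mul_comm _ _)
  have qe12b : J L t (fun q => pd e2 (fun r => (unc p r + unc n r) * pd e2 (unc φ) r) q * unc φ q)
      = - J L t (fun q => (unc p q + unc n q) * pd e2 (unc φ) q * pd e2 (unc φ) q) :=
    Jibp2 hL.le nSU nPhi
  have qe13 : J L t (fun q => unc φ q * pd e3 (fun r => (unc p r + unc n r) * pd e3 (unc φ) r) q)
      = J L t (fun q => pd e3 (fun r => (unc p r + unc n r) * pd e3 (unc φ) r) q * unc φ q) :=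
    J_congr (fun q => mul_comm _ _)
  have qe13b : J L t (fun q => pd e3 (fun r => (unc p r + unc n r) * pd e3 (unc φ) r) q * unc φ q)
      = - J L t (fun q => (unc p q + unc n q) * pd e3 (unc φ) q * pd e3 (unc φ) q) :=
    Jibp3 nSV nPhi
  have qe14 : J L t (fun q => (unc p q - unc n q) ^ 2
        + (unc p q + unc n q) * (pd e2 (unc φ) q ^ 2 + pd e3 (unc φ) q ^ 2))
      = J L t (fun q => (unc p q - unc n q) * (unc p q - unc n q))
        + J L t (fun q => (unc p q + unc n q) * pd e2 (unc φ) q * pd e2 (unc φ) q)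
        + J L t (fun q => (unc p q + unc n q) * pd e3 (unc φ) q * pd e3 (unc φ) q) := by
    rw [J_congr (H2 := fun q => ((unc p q - unc n q) * (unc p q - unc n q)
        + (unc p q + unc n q) * pd e2 (unc φ) q * pd e2 (unc φ) q)
        + (unc p q + unc n q) * pd e3 (unc φ) q * pd e3 (unc φ) q) (fun q => by ring),
      J_add (((cP.fun_sub cN).fun_mul (cP.fun_sub cN)).fun_add (((cP.fun_add cN).fun_mul cU).fun_mul cU))
        (((cP.fun_add cN).fun_mul cV).fun_mul cV),
      J_add ((cP.fun_sub cN).fun_mul (cP.fun_sub cN)) (((cP.fun_add cN).fun_mul cU).fun_mul cU)]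
  -- the value identity
  have hval : (1/2 : ℝ) * J L t (pd e1 (fun r => pd e2 (unc φ) r ^ 2 + pd e3 (unc φ) r ^ 2))
      = -(J L t (fun q => (unc p q - unc n q) ^ 2
          + (unc p q + unc n q) * (pd e2 (unc φ) q ^ 2 + pd e3 (unc φ) q ^ 2))) := by
    linarith [qe1, qe1b, qe2, qe3, qe4, qe4b, qe5, qe5b, qe5c, qe6, qe6b, qe6c, qe7, qe7b, qe8, qe8b, qe9, qe9b, qe9c, qe10, qe10b, qe10c, qe11, qe12, qe12b, qe13, qe13b, qe14]
  have hTt : (∫ x in (0:ℝ)..L, ∫ y in (0:ℝ)..L,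
        ((p t x y - n t x y) ^ 2
          + (p t x y + n t x y) *
            ((deriv (fun b => φ t b y) x) ^ 2 + (deriv (fun b => φ t x b) y) ^ 2)))
      = J L t (fun q => (unc p q - unc n q) ^ 2
          + (unc p q + unc n q) * (pd e2 (unc φ) q ^ 2 + pd e3 (unc φ) q ^ 2)) := by
    simp only [bφ2, bφ3]; rfl
  constructor
  · have hfun : (fun s => (1 / 2 : ℝ) * ∫ x in (0:ℝ)..L, ∫ y in (0:ℝ)..L,
          ((deriv (fun b => φ s b y) x) ^ 2 + (deriv (fun b => φ s x b) y) ^ 2))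
        = (fun s => (1/2 : ℝ) * J L s (fun r => pd e2 (unc φ) r ^ 2 + pd e3 (unc φ) r ^ 2)) := by
      funext s; simp only [bφ2, bφ3]; rfl
    rw [hfun, hTt, ← hval]
    exact (hasDerivAt_double _ (((contDiff_pd sPhi e2).pow 2).add ((contDiff_pd sPhi e3).pow 2)) t).const_mul (1/2)
  · rw [hTt]
    refine neg_nonpos.mpr (J_nonneg hL.le (fun q => ?_))
    exact add_nonneg (sq_nonneg _) (mul_nonneg
      (add_nonneg (hpnn q.1 q.2.1 q.2.2) (hnnn q.1 q.2.1 q.2.2))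
      (add_nonneg (sq_nonneg _) (sq_nonneg _)))
end
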